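/- arXiv:1308.3037 — 10 statements merged into one kernel-verified Lean document; each statement's English description precedes it below -/
import Mathlib

section
/- Let k be a positive integer and H a graph with at most k(k+1)/2 edges. Then H has an 'almost k-coloring', i.e., either a proper k-coloring, or a proper (k+1)-coloring in which at least one color class is a singleton. -/
/-!
If every vertex has degree less than `k`, greedy colouring uses at most `k` colours. Otherwise
some vertex `v` has degree at least `k`, and deleting its edges leaves at most `(k - 1) k / 2`
edges. A graph with at most `m (m + 1) / 2` edges is `(m + 1)`-colourable (by the same dichotomy
and induction on `m`), so the rest of the graph can be coloured with `k` colours, and `v` receives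
the new colour `k + 1` on its own.
-/

open Finset Function

theorem setOf_update_eq_singleton {α β : Type*} [DecidableEq α] {c : α → β} {i : β}
    (hi : ∀ u, c u ≠ i) (v : α) : {u | update c v i u = i} = {v} := by
  ext u
  rcases eq_or_ne u v with rfl | hu
  · simp
  · simp [hi u, hu]

namespace SimpleGraph

variable {V : Type*}

def IsColoringUpTo (G : SimpleGraph V) (c : V → ℕ) (n : ℕ) : Prop :=
  (∀ u v, G.Adj u v → c u ≠ c v) ∧ ∀ v, c v ∈ Icc 1 n

namespace IsColoringUpTo

variable {G : SimpleGraph V} {c : V → ℕ} {n : ℕ}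

theorem le (hc : G.IsColoringUpTo c n) (v : V) : c v ≤ n :=
  (mem_Icc.1 (hc.2 v)).2

theorem mono (hc : G.IsColoringUpTo c n) {m : ℕ} (hnm : n ≤ m) : G.IsColoringUpTo c m :=
  ⟨hc.1, fun v => Icc_subset_Icc_right hnm (hc.2 v)⟩

variable [DecidableEq V] {v : V}

theorem update (hc : (G.deleteIncidenceSet v).IsColoringUpTo c n) {i : ℕ} (hi : i ∈ Icc 1 n)
    (hfree : ∀ u, G.Adj v u → c u ≠ i) : G.IsColoringUpTo (update c v i) n := by
  refine ⟨fun u w huw => ?_, fun u => ?_⟩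
  · rcases eq_or_ne u v with rfl | hu
    · rw [update_self, update_of_ne huw.ne']
      exact (hfree w huw).symm
    rcases eq_or_ne w v with rfl | hw
    · rw [update_self, update_of_ne hu]
      exact hfree u huw.symm
    rw [update_of_ne hu, update_of_ne hw]
    exact hc.1 u w (deleteIncidenceSet_adj.2 ⟨huw, hu, hw⟩)
  · rcases eq_or_ne u v with rfl | hu
    · simpa using hi
    · simpa [update_of_ne hu] using hc.2 u

theorem update_succ (hc : (G.deleteIncidenceSet v).IsColoringUpTo c n) :
    G.IsColoringUpTo (Function.update c v (n + 1)) (n + 1) :=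
  (hc.mono n.le_succ).update (by simp) fun u _ => (Nat.lt_succ_of_le (hc.le u)).ne

end IsColoringUpTo

variable [Fintype V] (G : SimpleGraph V) [DecidableRel G.Adj]

theorem ncard_edgeSet_deleteIncidenceSet_add_degree (v : V) :
    (G.deleteIncidenceSet v).edgeSet.ncard + G.degree v = G.edgeSet.ncard := by
  classical
  rw [edgeSet_deleteIncidenceSet, ← card_incidenceFinset_eq_degree, incidenceFinset,
    ← Set.ncard_eq_toFinset_card']
  exact Set.ncard_sdiff_add_ncard_of_subset (G.incidenceSet_subset v) (Set.toFinite _)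

variable {G}

theorem two_mul_ncard_edgeSet_deleteIncidenceSet_le {j : ℕ} {v : V}
    (hE : 2 * G.edgeSet.ncard ≤ (j + 1) * (j + 2)) (hv : j + 1 ≤ G.degree v) :
    2 * (G.deleteIncidenceSet v).edgeSet.ncard ≤ j * (j + 1) := by
  have := G.ncard_edgeSet_deleteIncidenceSet_add_degree v
  have : (j + 1) * (j + 2) = j * (j + 1) + 2 * (j + 1) := by ring
  omega

theorem exists_isColoringUpTo_of_degree_le {d : ℕ} (hd : ∀ v, G.degree v ≤ d) :
    ∃ c, G.IsColoringUpTo c (d + 1) := by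
  classical
  induction hm : G.edgeSet.ncard using Nat.strong_induction_on generalizing G with
  | _ m ih =>
  by_cases hG : ∃ v, 0 < G.degree v
  · obtain ⟨v, hv⟩ := hG
    have hlt : (G.deleteIncidenceSet v).edgeSet.ncard < m := by
      have := G.ncard_edgeSet_deleteIncidenceSet_add_degree v
      omega
    obtain ⟨c, hc⟩ := ih _ hlt (G := G.deleteIncidenceSet v)
      (fun u => (degree_le_of_le (G.deleteIncidenceSet_le v)).trans (hd u)) rfl
    have hused : #((G.neighborFinset v).image c) < #(Icc 1 (d + 1)) := by
      rw [Nat.card_Icc, Nat.add_sub_cancel]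
      exact (card_image_le.trans_eq (G.card_neighborFinset_eq_degree v)).trans_lt
        (Nat.lt_succ_of_le (hd v))
    obtain ⟨i, hi, hfree⟩ := exists_mem_notMem_of_card_lt_card hused
    exact ⟨_, hc.update hi fun u hvu hui =>
      hfree (mem_image.2 ⟨u, (G.mem_neighborFinset v u).2 hvu, hui⟩)⟩
  · push Not at hG
    refine ⟨fun _ => 1, fun u w huw => ?_, fun _ => by simp⟩
    exact absurd (hG u) ((G.degree_pos_iff_exists_adj u).2 ⟨w, huw⟩).not_ge

omit [DecidableRel G.Adj] in
theorem exists_isColoringUpTo_succ_of_two_mul_ncard_edgeSet_le (k : ℕ)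
    (hE : 2 * G.edgeSet.ncard ≤ k * (k + 1)) : ∃ c, G.IsColoringUpTo c (k + 1) := by
  classical
  induction k generalizing G with
  | zero =>
    refine G.exists_isColoringUpTo_of_degree_le fun v => ?_
    have := G.degree_le_card_edgeFinset v
    rw [← Set.ncard_coe_finset, coe_edgeFinset] at this
    omega
  | succ k ih =>
    by_cases hdeg : ∀ v, G.degree v ≤ k
    · obtain ⟨c, hc⟩ := G.exists_isColoringUpTo_of_degree_le hdeg
      exact ⟨c, hc.mono k.succ.le_succ⟩
    push Not at hdeg
    obtain ⟨v, hv⟩ := hdeg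
    obtain ⟨c, hc⟩ := ih (two_mul_ncard_edgeSet_deleteIncidenceSet_le hE hv)
    exact ⟨_, hc.update_succ⟩

end SimpleGraph

open SimpleGraph in
/-- A graph with at most k(k+1)/2 edges has an almost k-coloring:
either a proper k-coloring, or a proper (k+1)-coloring with a singleton color class. -/
theorem stmt_0 {V : Type*} [Fintype V] (k : ℕ) (hk : 1 ≤ k) (H : SimpleGraph V)
    (hE : 2 * H.edgeSet.ncard ≤ k * (k + 1)) :
    (∃ c : V → ℕ, (∀ u v, H.Adj u v → c u ≠ c v) ∧ ∀ v, c v ∈ Finset.Icc 1 k) ∨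
    (∃ c : V → ℕ, (∀ u v, H.Adj u v → c u ≠ c v) ∧ (∀ v, c v ∈ Finset.Icc 1 (k + 1)) ∧
      ∃ i ∈ Finset.Icc 1 (k + 1), {v | c v = i}.ncard = 1) := by
  classical
  obtain ⟨j, rfl⟩ : ∃ j, k = j + 1 := ⟨k - 1, by omega⟩
  by_cases hdeg : ∀ v, H.degree v ≤ j
  · exact Or.inl (exists_isColoringUpTo_of_degree_le hdeg)
  push Not at hdeg
  obtain ⟨v, hv⟩ := hdeg
  obtain ⟨c, hc⟩ := exists_isColoringUpTo_succ_of_two_mul_ncard_edgeSet_le j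
    (two_mul_ncard_edgeSet_deleteIncidenceSet_le hE hv)
  have hsingle := setOf_update_eq_singleton (fun u => (Nat.lt_succ_of_le (hc.le u)).ne) v
  refine Or.inr ⟨_, hc.update_succ.1, hc.update_succ.2, j + 2, by simp, ?_⟩
  rw [hsingle, Set.ncard_singleton]
end

section
/- Let G be a graph with a proper r-coloring c, and let P ⊆ V(G) be a set of vertices such that every two distinct vertices of P have distance greater than 3 in G. Then for every proper coloring d of the induced subgraph G[P] using colors from {1,...,r+1}, there exists a proper (r+1)-coloring f of G such that f(x)=d(x) for every x in P, and moreover every vertex v with f(v)≠c(v) lies in the closed neighborhood of a unique vertex x of P, and if v≠x then c(v)=d(x). -/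
/-- Albertson's extension lemma with control on recolored vertices. -/
theorem stmt_1 {V : Type*} [Fintype V] (r : ℕ) (G : SimpleGraph V)
    (c : V → ℕ) (hc : ∀ u v, G.Adj u v → c u ≠ c v)
    (hcr : ∀ v, c v ∈ Finset.Icc 1 r)
    (P : Set V)
    (hP : ∀ x ∈ P, ∀ y ∈ P, x ≠ y → ∀ p : G.Walk x y, 3 < p.length)
    (d : V → ℕ) (hd : ∀ x ∈ P, ∀ y ∈ P, G.Adj x y → d x ≠ d y)
    (hdr : ∀ x ∈ P, d x ∈ Finset.Icc 1 (r + 1)) :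
    ∃ f : V → ℕ, (∀ u v, G.Adj u v → f u ≠ f v) ∧
      (∀ v, f v ∈ Finset.Icc 1 (r + 1)) ∧
      (∀ x ∈ P, f x = d x) ∧
      (∀ v, f v ≠ c v →
        (∃! x, x ∈ P ∧ (v = x ∨ G.Adj x v)) ∧
        (∀ x ∈ P, (v = x ∨ G.Adj x v) → v ≠ x → c v = d x)) := by
  classical
  -- no two vertices of P are adjacent
  have hP1 : ∀ x ∈ P, ∀ y ∈ P, G.Adj x y → False := by
    intro x hx y hy hxy
    have := hP x hx y hy hxy.ne (SimpleGraph.Walk.cons hxy SimpleGraph.Walk.nil)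
    simp at this
  -- a vertex adjacent to two vertices of P forces them equal
  have hP2 : ∀ x ∈ P, ∀ y ∈ P, ∀ v, G.Adj x v → G.Adj y v → x = y := by
    intro x hx y hy v hxv hyv
    by_contra hne
    have := hP x hx y hy hne
      (SimpleGraph.Walk.cons hxv (SimpleGraph.Walk.cons hyv.symm SimpleGraph.Walk.nil))
    simp at this
  -- adjacent vertices cannot be adjacent to distinct vertices of P
  have hP3 : ∀ x ∈ P, ∀ y ∈ P, ∀ v w, G.Adj x v → G.Adj v w → G.Adj y w → x = y := by
    intro x hx y hy v w hxv hvw hyw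
    by_contra hne
    have := hP x hx y hy hne
      (SimpleGraph.Walk.cons hxv (SimpleGraph.Walk.cons hvw
        (SimpleGraph.Walk.cons hyw.symm SimpleGraph.Walk.nil)))
    simp at this
  set f : V → ℕ := fun v =>
    if v ∈ P then d v
    else if ∃ x ∈ P, G.Adj x v ∧ c v = d x then r + 1 else c v with hf
  have hfP : ∀ x ∈ P, f x = d x := by intro x hx; simp [hf, hx]
  have hcle : ∀ v, c v ≤ r := fun v => (Finset.mem_Icc.mp (hcr v)).2
  refine ⟨f, ?_, ?_, hfP, ?_⟩
  · -- properness
    intro u v huv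
    by_cases hu : u ∈ P <;> by_cases hv : v ∈ P
    · exact absurd huv (fun h => hP1 u hu v hv h)
    · -- u ∈ P, v ∉ P
      simp only [hf, hu, hv, if_true, if_false]
      by_cases hrec : ∃ x ∈ P, G.Adj x v ∧ c v = d x
      · obtain ⟨x, hx, hxv, hcd⟩ := hrec
        have hxu : x = u := hP2 x hx u hu v hxv huv
        rw [if_pos ⟨x, hx, hxv, hcd⟩]
        have : d u ≤ r := by rw [hxu] at hcd; rw [← hcd]; exact hcle v
        omega
      · rw [if_neg hrec]
        intro h
        exact hrec ⟨u, hu, huv, h.symm⟩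
    · -- u ∉ P, v ∈ P
      simp only [hf, hu, hv, if_true, if_false]
      by_cases hrec : ∃ x ∈ P, G.Adj x u ∧ c u = d x
      · obtain ⟨x, hx, hxu, hcd⟩ := hrec
        have hxv : x = v := hP2 x hx v hv u hxu huv.symm
        rw [if_pos ⟨x, hx, hxu, hcd⟩]
        have : d v ≤ r := by rw [hxv] at hcd; rw [← hcd]; exact hcle u
        omega
      · rw [if_neg hrec]
        intro h
        exact hrec ⟨v, hv, huv.symm, h⟩
    · -- u ∉ P, v ∉ P
      simp only [hf, hu, hv, if_false]
      by_cases hru : ∃ x ∈ P, G.Adj x u ∧ c u = d x <;>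
        by_cases hrv : ∃ x ∈ P, G.Adj x v ∧ c v = d x
      · obtain ⟨x, hx, hxu, hcu⟩ := hru
        obtain ⟨y, hy, hyv, hcv⟩ := hrv
        have hxy : x = y := hP3 x hx y hy u v hxu huv hyv
        exact absurd (hcu.trans (by rw [hxy, ← hcv])) (hc u v huv)
      · rw [if_pos hru, if_neg hrv]
        have := hcle v; omega
      · rw [if_neg hru, if_pos hrv]
        have := hcle u; omega
      · rw [if_neg hru, if_neg hrv]
        exact hc u v huv
  · -- range
    intro v
    simp only [hf]
    by_cases hv : v ∈ P
    · rw [if_pos hv]; exact hdr v hv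
    · rw [if_neg hv]
      by_cases hrec : ∃ x ∈ P, G.Adj x v ∧ c v = d x
      · rw [if_pos hrec]; simp
      · rw [if_neg hrec]
        have := hcr v
        simp only [Finset.mem_Icc] at this ⊢
        omega
  · -- recoloring control
    intro v hfv
    by_cases hv : v ∈ P
    · refine ⟨⟨v, ⟨hv, Or.inl rfl⟩, ?_⟩, ?_⟩
      · rintro y ⟨hy, hy2 | hy2⟩
        · exact hy2.symm
        · exact absurd hy2 (fun h => hP1 y hy v hv h)
      · rintro x hx (rfl | hxv) hne
        · exact absurd rfl hne
        · exact absurd hxv (fun h => hP1 x hx v hv h)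
    · have hrec : ∃ x ∈ P, G.Adj x v ∧ c v = d x := by
        by_contra h
        apply hfv
        simp [hf, hv, h]
      obtain ⟨x, hx, hxv, hcd⟩ := hrec
      refine ⟨⟨x, ⟨hx, Or.inr hxv⟩, ?_⟩, ?_⟩
      · rintro y ⟨hy, rfl | hy2⟩
        · exact absurd hy hv
        · exact (hP2 x hx y hy v hxv hy2).symm
      · rintro y hy (rfl | hyv) hne
        · exact absurd hy hv
        · rw [hcd, hP2 x hx y hy v hxv hyv]
end

section
/- Let G be a graph with chromatic number at most r and let P ⊆ V(G). Suppose every pair of distinct vertices in P have distance at least four in G. Then every proper coloring of G[P] using colors from {1,...,r+1} can be extended to a proper (r+1)-coloring of G. -/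
/-- Albertson's theorem: if precolored vertices are pairwise at distance
at least four, every (r+1)-precoloring extends to an (r+1)-coloring. -/
theorem stmt_2 {V : Type*} [Fintype V] (r : ℕ) (G : SimpleGraph V)
    (hχ : G.chromaticNumber ≤ r) (P : Set V)
    (hP : ∀ x ∈ P, ∀ y ∈ P, x ≠ y → ∀ p : G.Walk x y, 4 ≤ p.length)
    (d : V → ℕ) (hd : ∀ x ∈ P, ∀ y ∈ P, G.Adj x y → d x ≠ d y)
    (hdr : ∀ x ∈ P, d x ∈ Finset.Icc 1 (r + 1)) :
    ∃ f : V → ℕ, (∀ u v, G.Adj u v → f u ≠ f v) ∧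
      (∀ v, f v ∈ Finset.Icc 1 (r + 1)) ∧ ∀ x ∈ P, f x = d x := by
  classical
  obtain ⟨C⟩ := (SimpleGraph.chromaticNumber_le_iff_colorable).mp hχ
  set c : V → ℕ := fun v => (C v).val + 1 with hc
  have hcprop : ∀ u v, G.Adj u v → c u ≠ c v := by
    intro u v huv h
    exact C.valid huv (Fin.ext (by simpa [hc] using h))
  have hcbd : ∀ v, 1 ≤ c v ∧ c v ≤ r := fun v =>
    ⟨Nat.le_add_left 1 _, (C v).isLt⟩
  -- no two vertices of P are adjacent
  have hPnoadj : ∀ x ∈ P, ∀ y ∈ P, ¬ G.Adj x y := by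
    intro x hx y hy hxy
    have := hP x hx y hy hxy.ne hxy.toWalk
    simp [SimpleGraph.Adj.toWalk] at this
  set f : V → ℕ := fun v =>
    if hv : v ∈ P then d v
    else if h2 : ∃ p, p ∈ P ∧ G.Adj p v then
      (if c v = d h2.choose then r + 1 else c v)
    else c v with hf
  -- uniqueness of the P-neighbor
  have huniq : ∀ (v : V) (h2 : ∃ p, p ∈ P ∧ G.Adj p v), ∀ u ∈ P, G.Adj u v →
      h2.choose = u := by
    intro v h2 u hu huv
    by_contra hne
    have hp := h2.choose_spec
    have := hP _ hp.1 _ hu hne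
      (SimpleGraph.Walk.cons hp.2 (SimpleGraph.Walk.cons huv.symm SimpleGraph.Walk.nil))
    simp at this
  -- choose p and choose q for adjacent u v must coincide
  have hsame : ∀ u v, G.Adj u v → ∀ (h2u : ∃ p, p ∈ P ∧ G.Adj p u)
      (h2v : ∃ p, p ∈ P ∧ G.Adj p v), h2u.choose = h2v.choose := by
    intro u v huv h2u h2v
    by_contra hne
    have hpu := h2u.choose_spec
    have hpv := h2v.choose_spec
    have := hP _ hpu.1 _ hpv.1 hne
      (SimpleGraph.Walk.cons hpu.2 (SimpleGraph.Walk.cons huv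
        (SimpleGraph.Walk.cons hpv.2.symm SimpleGraph.Walk.nil)))
    simp at this
  refine ⟨f, ?_, ?_, ?_⟩
  · intro u v huv hfuv
    by_cases hu : u ∈ P <;> by_cases hv : v ∈ P
    · exact hPnoadj u hu v hv huv
    · -- u ∈ P, v ∉ P
      have h2 : ∃ p, p ∈ P ∧ G.Adj p v := ⟨u, hu, huv⟩
      have hch := huniq v h2 u hu huv
      rw [hf] at hfuv
      simp only [dif_pos hu, dif_neg hv, dif_pos h2, hch] at hfuv
      by_cases hcv : c v = d u
      · rw [if_pos hcv] at hfuv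
        have := (hcbd v).2
        omega
      · rw [if_neg hcv] at hfuv
        exact hcv hfuv.symm
    · -- v ∈ P, u ∉ P
      have h2 : ∃ p, p ∈ P ∧ G.Adj p u := ⟨v, hv, huv.symm⟩
      have hch := huniq u h2 v hv huv.symm
      rw [hf] at hfuv
      simp only [dif_pos hv, dif_neg hu, dif_pos h2, hch] at hfuv
      by_cases hcu : c u = d v
      · rw [if_pos hcu] at hfuv
        have := (hcbd u).2
        omega
      · rw [if_neg hcu] at hfuv
        exact hcu hfuv
    · -- neither in P
      rw [hf] at hfuv
      simp only [dif_neg hu, dif_neg hv] at hfuv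
      by_cases h2u : ∃ p, p ∈ P ∧ G.Adj p u <;>
        by_cases h2v : ∃ p, p ∈ P ∧ G.Adj p v
      · simp only [dif_pos h2u, dif_pos h2v] at hfuv
        have hpq := hsame u v huv h2u h2v
        by_cases hcu : c u = d h2u.choose <;> by_cases hcv : c v = d h2v.choose
        · exact hcprop u v huv (by rw [hcu, hcv, hpq])
        · rw [if_pos hcu, if_neg hcv] at hfuv
          have := (hcbd v).2; omega
        · rw [if_neg hcu, if_pos hcv] at hfuv
          have := (hcbd u).2; omega
        · rw [if_neg hcu, if_neg hcv] at hfuv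
          exact hcprop u v huv hfuv
      · simp only [dif_pos h2u, dif_neg h2v] at hfuv
        by_cases hcu : c u = d h2u.choose
        · rw [if_pos hcu] at hfuv
          have := (hcbd v).2; omega
        · rw [if_neg hcu] at hfuv
          exact hcprop u v huv hfuv
      · simp only [dif_neg h2u, dif_pos h2v] at hfuv
        by_cases hcv : c v = d h2v.choose
        · rw [if_pos hcv] at hfuv
          have := (hcbd u).2; omega
        · rw [if_neg hcv] at hfuv
          exact hcprop u v huv hfuv
      · simp only [dif_neg h2u, dif_neg h2v] at hfuv
        exact hcprop u v huv hfuv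
  · intro v
    rw [hf]
    simp only [Finset.mem_Icc]
    by_cases hv : v ∈ P
    · simp only [dif_pos hv]
      have := hdr v hv
      simpa [Finset.mem_Icc] using this
    · simp only [dif_neg hv]
      by_cases h2 : ∃ p, p ∈ P ∧ G.Adj p v
      · simp only [dif_pos h2]
        by_cases hcv : c v = d h2.choose
        · rw [if_pos hcv]; omega
        · rw [if_neg hcv]; have := hcbd v; omega
      · simp only [dif_neg h2]; have := hcbd v; omega
  · intro x hx
    rw [hf]
    simp only [dif_pos hx]
end

section
/- Let k be a positive integer, G a graph with chromatic number at most r, and P ⊆ V(G). Let D_G(P,3) be the set of unordered pairs {x,y} of distinct vertices of P with d_G(x,y) ≤ 3. If |D_G(P,3)| ≤ k(k+1)/2, then every proper coloring d : P → {1,...,r+1} of G[P] can be extended to a proper coloring f : V(G) → {1,...,r+k} of G with f(u)=d(u) for each u ∈ P. -/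
/-- The set of unordered pairs of distinct vertices of `P` at distance at most `m` in `G`. -/
def pairsAtMost {V : Type*} (G : SimpleGraph V) (P : Set V) (m : ℕ) : Set (Sym2 V) :=
  {e | ∃ x y, e = s(x, y) ∧ x ∈ P ∧ y ∈ P ∧ x ≠ y ∧ ∃ p : G.Walk x y, p.length ≤ m}

/-!
Let `S` be the vertices of `P` whose colour is not `r + 1`. Colour `S` with new colours
`μ ∈ {1, …, k}` so that vertices of `S` at distance at most `3` get different colours and
vertices at distance at most `2` from a vertex of colour `r + 1` avoid colour `1`. Greedy
colouring, always removing a vertex of least weight (degree plus twice that constraint),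
succeeds for all but at most one vertex `u₀` because the total weight is at most
`2 |D_G(P, 3)| ≤ k (k + 1)`.
Then take an `r`-colouring `c` of `G` with `c u₀ = d u₀`, keep `d` on `P`, and give a vertex
`v ∉ P` the colour `r + μ u` if `c v = d u` for a neighbour `u ∈ P` of colour `μ u`, and `c v`
otherwise. Two adjacent recoloured vertices come from precoloured vertices at distance at most
`3`, and a recoloured vertex next to a vertex of colour `r + 1` got a colour other than `r + 1`.
-/

open Finset

section

variable {V : Type*}

section Greedy

variable (K : SimpleGraph V) (Q : V → Prop)

/-- Colour `0` marks the (at most one) uncoloured vertex of `S`. -/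
structure IsAlmostColoring (S : Finset V) (k : ℕ) (μ : V → ℕ) : Prop where
  le : ∀ u ∈ S, μ u ≤ k
  ne_of_adj : ∀ u ∈ S, ∀ v ∈ S, K.Adj u v → μ u ≠ 0 → μ u ≠ μ v
  ne_one : ∀ u ∈ S, Q u → μ u ≠ 1
  subsingleton_zero : {u | u ∈ S ∧ μ u = 0}.Subsingleton

variable {K Q}

lemma IsAlmostColoring.insert [DecidableEq V] {S : Finset V} {k : ℕ} {μ : V → ℕ}
    (h : IsAlmostColoring K Q S k μ) {u : V} (hu : u ∉ S) {a : ℕ} (hak : a ≤ k)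
    (hadj : a ≠ 0 → ∀ v ∈ S, K.Adj u v → a ≠ μ v) (hQ : Q u → a ≠ 1)
    (hzero : a = 0 → ∀ v ∈ S, μ v ≠ 0) :
    IsAlmostColoring K Q (insert u S) k (Function.update μ u a) := by
  have upd_ne : ∀ v ∈ S, Function.update μ u a v = μ v := fun v hv =>
    Function.update_of_ne (ne_of_mem_of_not_mem hv hu) _ _
  constructor
  · intro v hv
    rcases mem_insert.mp hv with rfl | hvS
    · simpa
    · simpa [upd_ne v hvS] using h.le v hvS
  · intro v hv w hw hvw hv0
    rcases mem_insert.mp hv with rfl | hvS <;> rcases mem_insert.mp hw with rfl | hwS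
    · exact absurd hvw (K.irrefl)
    · simp only [Function.update_self, upd_ne w hwS] at hv0 ⊢
      exact hadj hv0 w hwS hvw
    · simp only [Function.update_self, upd_ne v hvS] at hv0 ⊢
      rcases eq_or_ne a 0 with rfl | ha
      · exact hv0
      · exact (hadj ha v hvS hvw.symm).symm
    · simp only [upd_ne v hvS, upd_ne w hwS] at hv0 ⊢
      exact h.ne_of_adj v hvS w hwS hvw hv0
  · intro v hv hQv
    rcases mem_insert.mp hv with rfl | hvS
    · simpa using hQ hQv
    · simpa [upd_ne v hvS] using h.ne_one v hvS hQv
  · rintro v ⟨hv, hv0⟩ w ⟨hw, hw0⟩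
    rcases mem_insert.mp hv with rfl | hvS <;> rcases mem_insert.mp hw with rfl | hwS
    · rfl
    · simp only [Function.update_self, upd_ne w hwS] at hv0 hw0
      exact absurd hw0 (hzero hv0 w hwS)
    · simp only [Function.update_self, upd_ne v hvS] at hv0 hw0
      exact absurd hv0 (hzero hw0 v hvS)
    · simp only [upd_ne v hvS, upd_ne w hwS] at hv0 hw0
      exact h.subsingleton_zero ⟨hvS, hv0⟩ ⟨hwS, hw0⟩

variable (K Q) [DecidableRel K.Adj] [DecidablePred Q]

def weight (S : Finset V) (v : V) : ℕ :=
  #{w ∈ S | K.Adj v w} + if Q v then 2 else 0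

variable {K Q}

lemma weight_le_weight {S T : Finset V} (h : T ⊆ S) (v : V) : weight K Q T v ≤ weight K Q S v :=
  add_le_add_left (card_le_card (filter_subset_filter _ h)) _

lemma sum_weight_le_sum_weight {S T : Finset V} (h : T ⊆ S) :
    ∑ v ∈ T, weight K Q T v ≤ ∑ v ∈ S, weight K Q S v :=
  (sum_le_sum fun v _ => weight_le_weight h v).trans (sum_le_sum_of_subset h)

lemma card_add_two_mul_le_sum_weight [DecidableEq V] {S N : Finset V} {u z : V} (hu : u ∈ S)
    (hmin : ∀ v ∈ S, weight K Q S u ≤ weight K Q S v) (hN : N ⊆ {v ∈ S.erase u | K.Adj u v})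
    (hz : z ∈ S.erase u \ N) :
    (#N + 2) * (#N + if Q u then 2 else 0) ≤ ∑ v ∈ S, weight K Q S v := by
  have hcard : #N + 2 ≤ #S := by
    have hsub : insert u (insert z N) ⊆ S := by
      refine insert_subset hu (insert_subset (mem_of_mem_erase (mem_sdiff.1 hz).1) ?_)
      exact hN.trans ((filter_subset _ _).trans (erase_subset _ _))
    have hzN : z ∉ N := (mem_sdiff.1 hz).2
    have huzN : u ∉ insert z N := by
      rw [mem_insert, not_or]
      exact ⟨fun h => (ne_of_mem_erase (mem_sdiff.1 hz).1) h.symm,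
        fun h => (ne_of_mem_erase (filter_subset _ _ (hN h))) rfl⟩
    have := card_le_card hsub
    rw [card_insert_of_notMem huzN, card_insert_of_notMem hzN] at this
    omega
  have hweight : #N + (if Q u then 2 else 0) ≤ weight K Q S u :=
    Nat.add_le_add_right (card_le_card (hN.trans (filter_subset_filter _ (erase_subset _ _)))) _
  calc (#N + 2) * (#N + if Q u then 2 else 0) ≤ #S * weight K Q S u := by gcongr
    _ ≤ ∑ v ∈ S, weight K Q S v := by simpa using card_nsmul_le_sum S _ _ hmin

theorem exists_isAlmostColoring [DecidableEq V] {k : ℕ} (hk : 1 ≤ k) (S : Finset V)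
    (hS : ∑ v ∈ S, weight K Q S v ≤ k * (k + 1)) : ∃ μ, IsAlmostColoring K Q S k μ := by
  induction S using Finset.strongInduction with | H S ih =>
  rcases S.eq_empty_or_nonempty with rfl | hne
  · exact ⟨0, by simp, by simp, by simp, by simp [Set.subsingleton_empty]⟩
  obtain ⟨u, hu, hmin⟩ := S.exists_min_image (weight K Q S) hne
  obtain ⟨μ, hμ⟩ := ih (S.erase u) (erase_ssubset hu)
    ((sum_weight_le_sum_weight (erase_subset u S)).trans hS)
  rw [← insert_erase hu]
  set N := {v ∈ S.erase u | K.Adj u v ∧ μ v ≠ 0}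
  set blocked := N.image μ ∪ if Q u then {1} else ∅
  by_cases hfree : ∃ a ∈ Icc 1 k, a ∉ blocked
  · obtain ⟨a, ha, hab⟩ := hfree
    refine ⟨_, hμ.insert (notMem_erase u S) (mem_Icc.1 ha).2 ?_ ?_ ?_⟩
    · intro ha0 v hv huv hav
      exact hab (mem_union_left _ (mem_image.2 ⟨v, mem_filter.2 ⟨hv, huv, hav ▸ ha0⟩, hav.symm⟩))
    · intro hQu ha1
      exact hab (mem_union_right _ (by simp [hQu, ha1]))
    · have := (mem_Icc.1 ha).1
      omega
  · have hk_le : k ≤ #N + if Q u then 1 else 0 := by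
      have hsub : Icc 1 k ⊆ blocked := fun a ha => by_contra fun hab => hfree ⟨a, ha, hab⟩
      calc k = #(Icc 1 k) := by simp
        _ ≤ #blocked := card_le_card hsub
        _ ≤ #N + if Q u then 1 else 0 := by
          refine (card_union_le _ _).trans (add_le_add card_image_le ?_)
          split_ifs <;> simp
    -- `u` is left uncoloured; a second uncoloured vertex would make `S` too large for the
    -- weight bound, since every vertex weighs at least as much as `u`
    refine ⟨_, hμ.insert (notMem_erase u S) (Nat.zero_le k) (absurd rfl) (fun _ => zero_ne_one) ?_⟩
    intro _ z hz hz0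
    have hzN : z ∈ S.erase u \ N := mem_sdiff.2 ⟨hz, fun h => (mem_filter.1 h).2.2 hz0⟩
    have key := (card_add_two_mul_le_sum_weight (N := N) hu hmin
      (fun v hv => mem_filter.2 ⟨(mem_filter.1 hv).1, (mem_filter.1 hv).2.1⟩) hzN).trans hS
    split_ifs at hk_le key <;> nlinarith

lemma card_filter_mk_eq_le_two [DecidableEq V] (s : Finset (V × V)) (q : V × V) :
    #{p ∈ s | s(p.1, p.2) = s(q.1, q.2)} ≤ 2 :=
  calc #{p ∈ s | s(p.1, p.2) = s(q.1, q.2)} ≤ #({q, q.swap} : Finset (V × V)) := by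
        refine card_le_card fun p hp => ?_
        rcases Sym2.mk_eq_mk_iff.1 (mem_filter.1 hp).2 with rfl | rfl <;> simp
    _ ≤ 2 := card_le_two

/-- Each edge inside `S` is counted twice in the degrees, and each vertex satisfying `Q`
is charged twice to one of its edges towards `T`. -/
lemma sum_weight_le_two_mul_ncard [DecidableEq V] {S T : Finset V} (hST : Disjoint S T)
    (hQ : ∀ v ∈ S, Q v → ∃ w ∈ T, K.Adj v w) {E : Set (Sym2 V)} (hE : E.Finite)
    (hKE : ∀ u ∈ S, ∀ v ∈ S ∪ T, K.Adj u v → s(u, v) ∈ E) :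
    ∑ v ∈ S, weight K Q S v ≤ 2 * E.ncard := by
  set edge : V × V → Sym2 V := fun p => s(p.1, p.2)
  set A := {p ∈ S ×ˢ S | K.Adj p.1 p.2}
  set C := {p ∈ S ×ˢ T | K.Adj p.1 p.2}
  have hsum : ∑ v ∈ S, weight K Q S v = #A + 2 * #{v ∈ S | Q v} := by
    simp only [weight, sum_add_distrib, A, card_filter, sum_product, mul_sum, mul_ite, mul_one,
      mul_zero]
  have hQC : #{v ∈ S | Q v} ≤ #C := by
    refine card_le_card_of_surjOn Prod.fst fun v hv => ?_
    obtain ⟨hvS, hQv⟩ := mem_filter.1 hv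
    obtain ⟨w, hwT, hvw⟩ := hQ v hvS hQv
    exact ⟨(v, w), mem_filter.2 ⟨mem_product.2 ⟨hvS, hwT⟩, hvw⟩, rfl⟩
  have hA : #A ≤ 2 * #(A.image edge) :=
    card_le_mul_card_image A 2 fun e he => by
      obtain ⟨q, -, rfl⟩ := mem_image.1 he
      exact card_filter_mk_eq_le_two A q
  have hC : #(C.image edge) = #C := by
    refine card_image_of_injOn fun p hp q hq hpq => ?_
    rcases Sym2.mk_eq_mk_iff.1 hpq with h | h
    · exact h
    · have hp1 := (mem_product.1 (mem_filter.1 hp).1).1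
      have hq2 := (mem_product.1 (mem_filter.1 hq).1).2
      exact absurd hq2 (disjoint_left.1 hST (by simpa [h] using hp1))
  have hdisj : Disjoint (A.image edge) (C.image edge) := by
    simp only [disjoint_left, mem_image, not_exists, not_and]
    rintro _ ⟨p, hp, rfl⟩ q hq hqp
    have hp := mem_product.1 (mem_filter.1 hp).1
    have hq := mem_product.1 (mem_filter.1 hq).1
    rcases Sym2.mk_eq_mk_iff.1 hqp with rfl | rfl
    · exact disjoint_left.1 hST hp.2 hq.2
    · exact disjoint_left.1 hST hp.1 hq.2
  have hsub : A.image edge ∪ C.image edge ⊆ hE.toFinset := by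
    simp only [union_subset_iff, image_subset_iff, Set.Finite.mem_toFinset]
    refine ⟨fun p hp => ?_, fun p hp => ?_⟩ <;>
    · obtain ⟨hp, hadj⟩ := mem_filter.1 hp
      obtain ⟨h1, h2⟩ := mem_product.1 hp
      exact hKE p.1 h1 p.2 (by simp [h2]) hadj
  calc ∑ v ∈ S, weight K Q S v ≤ 2 * (#(A.image edge) + #(C.image edge)) := by omega
    _ = 2 * #(A.image edge ∪ C.image edge) := by rw [card_union_of_disjoint hdisj]
    _ ≤ 2 * E.ncard := by
      rw [Set.ncard_eq_toFinset_card E hE]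
      exact Nat.mul_le_mul_left 2 (card_le_card hsub)

end Greedy

namespace SimpleGraph

def withinDist (G : SimpleGraph V) (m : ℕ) : SimpleGraph V where
  Adj u v := u ≠ v ∧ ∃ p : G.Walk u v, p.length ≤ m
  symm := ⟨fun _ _ ⟨h, p, hp⟩ => ⟨h.symm, p.reverse, by simpa using hp⟩⟩
  loopless := ⟨fun _ h => h.1 rfl⟩

lemma withinDist_mono (G : SimpleGraph V) {m n : ℕ} (h : m ≤ n) : G.withinDist m ≤ G.withinDist n :=
  fun _ _ ⟨hne, p, hp⟩ => show _ ∧ _ from ⟨hne, p, hp.trans h⟩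

lemma Colorable.exists_coloring_eqOn {G : SimpleGraph V} {r : ℕ} (hG : G.Colorable r)
    {A : Set V} (hA : A.Subsingleton) {a : V → ℕ} (ha : ∀ u ∈ A, a u ∈ Icc 1 r) :
    ∃ c : V → ℕ, (∀ u v, G.Adj u v → c u ≠ c v) ∧ (∀ v, c v ∈ Icc 1 r) ∧ Set.EqOn c a A := by
  obtain ⟨C⟩ := hG
  have hC : ∀ u v, G.Adj u v → (C u : ℕ) + 1 ≠ C v + 1 := fun u v huv h =>
    C.valid huv (Fin.ext (by omega))
  have hCr : ∀ v, (C v : ℕ) + 1 ∈ Icc 1 r := fun v => mem_Icc.2 ⟨by omega, (C v).isLt⟩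
  rcases hA.eq_empty_or_singleton with rfl | ⟨u, rfl⟩
  · exact ⟨_, hC, hCr, Set.eqOn_empty _ _⟩
  · set σ := Equiv.swap ((C u : ℕ) + 1) (a u)
    refine ⟨fun v => σ ((C v : ℕ) + 1), fun v w hvw => σ.injective.ne (hC v w hvw), fun v => ?_,
      by simp [σ]⟩
    simp only [σ, Equiv.swap_apply_def]
    split_ifs
    exacts [ha u rfl, hCr u, hCr v]

end SimpleGraph

def NearColor (G : SimpleGraph V) (P : Set V) (d : V → ℕ) (a : ℕ) (u : V) : Prop :=
  ∃ w ∈ P, d w = a ∧ (G.withinDist 2).Adj u w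

open Classical in
noncomputable def extendColoring (G : SimpleGraph V) (P : Set V) (d c μ : V → ℕ) (r : ℕ)
    (v : V) : ℕ :=
  if v ∈ P then d v else if h : ∃ u ∈ P, G.Adj u v ∧ c v = d u then r + μ h.choose else c v

section extendColoring

variable {G : SimpleGraph V} {P : Set V} {d c μ : V → ℕ} {r : ℕ} {v : V}

lemma extendColoring_of_mem (hv : v ∈ P) : extendColoring G P d c μ r v = d v := by
  simp [extendColoring, hv]

lemma extendColoring_of_not_clash (hv : v ∉ P) (h : ¬∃ u ∈ P, G.Adj u v ∧ c v = d u) :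
    extendColoring G P d c μ r v = c v := by
  simp only [extendColoring, hv, if_false, dif_neg h]

lemma exists_extendColoring_eq_of_clash (hv : v ∉ P) (h : ∃ u ∈ P, G.Adj u v ∧ c v = d u) :
    ∃ u ∈ P, G.Adj u v ∧ c v = d u ∧ extendColoring G P d c μ r v = r + μ u := by
  obtain ⟨hu, huv, hcd⟩ := h.choose_spec
  exact ⟨h.choose, hu, huv, hcd, by simp only [extendColoring, hv, if_false, dif_pos h]⟩

variable {S : Finset V} {k : ℕ}

lemma mem_and_ne_zero_of_clash (hc : ∀ u v, G.Adj u v → c u ≠ c v) (hcr : ∀ v, c v ∈ Icc 1 r)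
    (hS : ∀ u ∈ P, d u ≠ r + 1 → u ∈ S) (hc0 : ∀ u ∈ S, μ u = 0 → c u = d u) {u : V}
    (hu : u ∈ P) (huv : G.Adj u v) (hcd : c v = d u) : u ∈ S ∧ μ u ≠ 0 := by
  have huS : u ∈ S := hS u hu (by have := mem_Icc.1 (hcr v); omega)
  exact ⟨huS, fun h0 => hc u v huv ((hc0 u huS h0).trans hcd.symm)⟩

lemma extendColoring_ne_of_mem_of_notMem (hdr : ∀ x ∈ P, d x ∈ Icc 1 (r + 1))
    (hc : ∀ u v, G.Adj u v → c u ≠ c v) (hcr : ∀ v, c v ∈ Icc 1 r)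
    (hS : ∀ u ∈ P, d u ≠ r + 1 → u ∈ S) (hc0 : ∀ u ∈ S, μ u = 0 → c u = d u)
    (hμ : IsAlmostColoring (G.withinDist 3) (NearColor G P d (r + 1)) S k μ) {w : V}
    (hv : v ∈ P) (hw : w ∉ P) (hvw : G.Adj v w) :
    extendColoring G P d c μ r v ≠ extendColoring G P d c μ r w := by
  rw [extendColoring_of_mem hv]
  by_cases hclash : ∃ u ∈ P, G.Adj u w ∧ c w = d u
  · obtain ⟨u, hu, huw, hcd, hfw⟩ := exists_extendColoring_eq_of_clash (μ := μ) (r := r) hw hclash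
    obtain ⟨huS, hμu⟩ := mem_and_ne_zero_of_clash hc hcr hS hc0 hu huw hcd
    rw [hfw]
    intro hdv
    have hdv1 : d v = r + 1 := by have := mem_Icc.1 (hdr v hv); omega
    have hcw := mem_Icc.1 (hcr w)
    have hnear : NearColor G P d (r + 1) u :=
      ⟨v, hv, hdv1, fun h => by subst h; omega, .cons huw (.cons hvw.symm .nil), by simp⟩
    exact hμ.ne_one u huS hnear (by omega)
  · rw [extendColoring_of_not_clash hw hclash]
    exact fun hdc => hclash ⟨v, hv, hvw, hdc.symm⟩

lemma extendColoring_ne_of_notMem (hc : ∀ u v, G.Adj u v → c u ≠ c v) (hcr : ∀ v, c v ∈ Icc 1 r)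
    (hS : ∀ u ∈ P, d u ≠ r + 1 → u ∈ S) (hc0 : ∀ u ∈ S, μ u = 0 → c u = d u)
    (hμ : IsAlmostColoring (G.withinDist 3) (NearColor G P d (r + 1)) S k μ) {w : V}
    (hv : v ∉ P) (hw : w ∉ P) (hvw : G.Adj v w) :
    extendColoring G P d c μ r v ≠ extendColoring G P d c μ r w := by
  have hcv := mem_Icc.1 (hcr v)
  have hcw := mem_Icc.1 (hcr w)
  by_cases hclash_v : ∃ u ∈ P, G.Adj u v ∧ c v = d u <;>
    by_cases hclash_w : ∃ u ∈ P, G.Adj u w ∧ c w = d u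
  · obtain ⟨u₁, hu₁, hu₁v, hcd₁, hfv⟩ :=
      exists_extendColoring_eq_of_clash (μ := μ) (r := r) hv hclash_v
    obtain ⟨u₂, hu₂, hu₂w, hcd₂, hfw⟩ :=
      exists_extendColoring_eq_of_clash (μ := μ) (r := r) hw hclash_w
    obtain ⟨hu₁S, hμ₁⟩ := mem_and_ne_zero_of_clash hc hcr hS hc0 hu₁ hu₁v hcd₁
    obtain ⟨hu₂S, -⟩ := mem_and_ne_zero_of_clash hc hcr hS hc0 hu₂ hu₂w hcd₂
    rw [hfv, hfw]
    rcases eq_or_ne u₁ u₂ with rfl | hne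
    · exact absurd (hcd₁.trans hcd₂.symm) (hc v w hvw)
    · have hadj : (G.withinDist 3).Adj u₁ u₂ :=
        ⟨hne, .cons hu₁v (.cons hvw (.cons hu₂w.symm .nil)), by simp⟩
      have := hμ.ne_of_adj u₁ hu₁S u₂ hu₂S hadj hμ₁
      omega
  · obtain ⟨u, hu, huv, hcd, hfv⟩ := exists_extendColoring_eq_of_clash (μ := μ) (r := r) hv hclash_v
    rw [hfv, extendColoring_of_not_clash hw hclash_w]
    have := (mem_and_ne_zero_of_clash hc hcr hS hc0 hu huv hcd).2
    omega
  · obtain ⟨u, hu, huw, hcd, hfw⟩ := exists_extendColoring_eq_of_clash (μ := μ) (r := r) hw hclash_w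
    rw [hfw, extendColoring_of_not_clash hv hclash_v]
    have := (mem_and_ne_zero_of_clash hc hcr hS hc0 hu huw hcd).2
    omega
  · rw [extendColoring_of_not_clash hv hclash_v, extendColoring_of_not_clash hw hclash_w]
    exact hc v w hvw

lemma extendColoring_mem_Icc (hk : 1 ≤ k) (hdr : ∀ x ∈ P, d x ∈ Icc 1 (r + 1))
    (hc : ∀ u v, G.Adj u v → c u ≠ c v) (hcr : ∀ v, c v ∈ Icc 1 r)
    (hS : ∀ u ∈ P, d u ≠ r + 1 → u ∈ S) (hc0 : ∀ u ∈ S, μ u = 0 → c u = d u)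
    (hμ : IsAlmostColoring (G.withinDist 3) (NearColor G P d (r + 1)) S k μ) (v : V) :
    extendColoring G P d c μ r v ∈ Icc 1 (r + k) := by
  by_cases hv : v ∈ P
  · rw [extendColoring_of_mem hv]
    have := mem_Icc.1 (hdr v hv)
    exact mem_Icc.2 ⟨this.1, by omega⟩
  by_cases hclash : ∃ u ∈ P, G.Adj u v ∧ c v = d u
  · obtain ⟨u, hu, huv, hcd, hfv⟩ := exists_extendColoring_eq_of_clash (μ := μ) (r := r) hv hclash
    obtain ⟨huS, hμu⟩ := mem_and_ne_zero_of_clash hc hcr hS hc0 hu huv hcd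
    have := hμ.le u huS
    exact hfv ▸ mem_Icc.2 ⟨by omega, by omega⟩
  · have := mem_Icc.1 (hcr v)
    exact extendColoring_of_not_clash hv hclash ▸ mem_Icc.2 ⟨this.1, by omega⟩

lemma extendColoring_adj_ne (hd : ∀ x ∈ P, ∀ y ∈ P, G.Adj x y → d x ≠ d y)
    (hdr : ∀ x ∈ P, d x ∈ Icc 1 (r + 1)) (hc : ∀ u v, G.Adj u v → c u ≠ c v)
    (hcr : ∀ v, c v ∈ Icc 1 r) (hS : ∀ u ∈ P, d u ≠ r + 1 → u ∈ S)
    (hc0 : ∀ u ∈ S, μ u = 0 → c u = d u)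
    (hμ : IsAlmostColoring (G.withinDist 3) (NearColor G P d (r + 1)) S k μ) {w : V}
    (hvw : G.Adj v w) : extendColoring G P d c μ r v ≠ extendColoring G P d c μ r w := by
  by_cases hv : v ∈ P <;> by_cases hw : w ∈ P
  · rw [extendColoring_of_mem hv, extendColoring_of_mem hw]
    exact hd v hv w hw hvw
  · exact extendColoring_ne_of_mem_of_notMem hdr hc hcr hS hc0 hμ hv hw hvw
  · exact (extendColoring_ne_of_mem_of_notMem hdr hc hcr hS hc0 hμ hw hv hvw.symm).symm
  · exact extendColoring_ne_of_notMem hc hcr hS hc0 hμ hv hw hvw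

end extendColoring

end

/-- If |D_G(P,3)| ≤ k(k+1)/2 then any (r+1)-precoloring of P extends to
an (r+k)-coloring of G. -/
theorem stmt_3 {V : Type*} [Fintype V] (k r : ℕ) (hk : 1 ≤ k)
    (G : SimpleGraph V) (hχ : G.chromaticNumber ≤ r) (P : Set V)
    (hD : 2 * (pairsAtMost G P 3).ncard ≤ k * (k + 1))
    (d : V → ℕ) (hd : ∀ x ∈ P, ∀ y ∈ P, G.Adj x y → d x ≠ d y)
    (hdr : ∀ x ∈ P, d x ∈ Finset.Icc 1 (r + 1)) :
    ∃ f : V → ℕ, (∀ u v, G.Adj u v → f u ≠ f v) ∧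
      (∀ v, f v ∈ Finset.Icc 1 (r + k)) ∧ ∀ u ∈ P, f u = d u := by
  classical
  set S : Finset V := {u | u ∈ P ∧ d u ≠ r + 1}
  set T : Finset V := {u | u ∈ P ∧ d u = r + 1}
  have hweight : ∑ v ∈ S, weight (G.withinDist 3) (NearColor G P d (r + 1)) S v ≤ k * (k + 1) := by
    refine (sum_weight_le_two_mul_ncard (T := T) ?_ ?_ (Set.toFinite _) ?_).trans hD
    · exact disjoint_filter.2 fun u _ huS huT => huS.2 huT.2
    · rintro v - ⟨w, hw, hdw, hvw⟩
      exact ⟨w, by simp [T, hw, hdw], G.withinDist_mono (by norm_num) hvw⟩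
    · intro u hu v hv ⟨huv, p, hp⟩
      have hvP : v ∈ P := by rcases mem_union.1 hv with h | h <;> exact (mem_filter.1 h).2.1
      exact ⟨u, v, rfl, (mem_filter.1 hu).2.1, hvP, huv, p, hp⟩
  obtain ⟨μ, hμ⟩ := exists_isAlmostColoring hk S hweight
  have hdS : ∀ u ∈ P, d u ≠ r + 1 → u ∈ S := fun u hu hdu => by simp [S, hu, hdu]
  obtain ⟨c, hc, hcr, hcd⟩ := (G.chromaticNumber_le_iff_colorable.1 hχ).exists_coloring_eqOn
    hμ.subsingleton_zero (a := d) fun u ⟨hu, _⟩ => by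
      obtain ⟨huP, hdu⟩ := mem_filter.1 hu |>.2
      have := mem_Icc.1 (hdr u huP)
      exact mem_Icc.2 ⟨this.1, by omega⟩
  have hc0 : ∀ u ∈ S, μ u = 0 → c u = d u := fun u hu h0 => hcd ⟨hu, h0⟩
  exact ⟨extendColoring G P d c μ r,
    fun u v => extendColoring_adj_ne hd hdr hc hcr hdS hc0 hμ,
    extendColoring_mem_Icc hk hdr hc hcr hdS hc0 hμ, fun u hu => extendColoring_of_mem hu⟩
end

section
/- Let G be a graph and P ⊆ V(G). Suppose P has a partition {P_0, P_1, ..., P_k} such that within each part P_i, all distinct vertices are at distance greater than 3 in G. Let d : P → {1,...,r+1} be a proper coloring of G[P]. If G has a proper r-coloring f with f(v)=d(v) for each v ∈ P_0, then G has a proper (r+k)-coloring f_k with f_k(v)=d(v) for every v ∈ P. -/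
/-- Extension lemma for a partition of P into k+1 parts, each part having
all its distinct vertices at distance greater than 3 in G. -/
theorem stmt_4 {V : Type*} [Fintype V] (r k : ℕ) (G : SimpleGraph V) (P : Set V)
    (Q : Fin (k + 1) → Set V)
    (hcover : P = ⋃ i, Q i)
    (hdisj : ∀ i j, i ≠ j → Disjoint (Q i) (Q j))
    (hdist : ∀ i, ∀ x ∈ Q i, ∀ y ∈ Q i, x ≠ y → ∀ p : G.Walk x y, 3 < p.length)
    (d : V → ℕ) (hd : ∀ x ∈ P, ∀ y ∈ P, G.Adj x y → d x ≠ d y)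
    (hdr : ∀ x ∈ P, d x ∈ Finset.Icc 1 (r + 1))
    (f : V → ℕ) (hf : ∀ u v, G.Adj u v → f u ≠ f v)
    (hfr : ∀ v, f v ∈ Finset.Icc 1 r)
    (hf0 : ∀ v ∈ Q 0, f v = d v) :
    ∃ g : V → ℕ, (∀ u v, G.Adj u v → g u ≠ g v) ∧
      (∀ v, g v ∈ Finset.Icc 1 (r + k)) ∧ ∀ v ∈ P, g v = d v := by
  classical
  have hQP : ∀ (j : Fin (k+1)) (v : V), v ∈ Q j → v ∈ P := by
    intro j v hv; rw [hcover]; exact Set.mem_iUnion.mpr ⟨j, hv⟩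
  suffices h : ∀ m : ℕ, m ≤ k → ∃ g : V → ℕ,
      (∀ u v, G.Adj u v → g u ≠ g v) ∧ (∀ v, g v ∈ Finset.Icc 1 (r + m)) ∧
      ∀ j : Fin (k+1), (j : ℕ) ≤ m → ∀ v ∈ Q j, g v = d v by
    obtain ⟨g, hg1, hg2, hg3⟩ := h k le_rfl
    refine ⟨g, hg1, hg2, ?_⟩
    intro v hv
    rw [hcover] at hv
    obtain ⟨j, hj⟩ := Set.mem_iUnion.mp hv
    exact hg3 j (Nat.lt_succ_iff.mp j.isLt) v hj
  intro m
  induction m with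
  | zero =>
    intro _
    refine ⟨f, hf, by simpa using hfr, ?_⟩
    intro j hj v hv
    have hj0 : j = 0 := Fin.ext (by simp only [Fin.val_zero]; omega)
    exact hf0 v (hj0 ▸ hv)
  | succ m ih =>
    intro hm
    obtain ⟨g, hg1, hg2, hg3⟩ := ih (by omega)
    set i : Fin (k+1) := ⟨m+1, by omega⟩ with hi
    have key : ∀ x ∈ Q i, ∀ y ∈ Q i, ∀ p : G.Walk x y, p.length ≤ 3 → x = y := by
      intro x hx y hy p hp
      by_contra hne
      exact absurd (hdist i x hx y hy hne p) (by omega)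
    set R : V → Prop := fun u => ∃ w ∈ Q i, G.Adj u w ∧ g u = d w with hR
    set g' : V → ℕ := fun u => if u ∈ Q i then d u else if R u then r + (m+1) else g u
      with hg'
    have hgub : ∀ v, 1 ≤ g v ∧ g v ≤ r + m := by
      intro v; have := hg2 v; simpa [Finset.mem_Icc] using this
    have hdub : ∀ v ∈ Q i, 1 ≤ d v ∧ d v ≤ r + 1 := by
      intro v hv
      simpa [Finset.mem_Icc] using hdr v (hQP i v hv)
    have cross : ∀ u v, G.Adj u v → u ∈ Q i → g' u ≠ g' v := by
      intro u v huv hu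
      by_cases hv : v ∈ Q i
      · exact absurd (key u hu v hv (SimpleGraph.Walk.cons huv SimpleGraph.Walk.nil)
          (by simp)) huv.ne
      by_cases hRv : R v
      · simp only [hg', if_pos hu, if_neg hv, if_pos hRv]
        obtain ⟨w, hw, hadj, heq⟩ := hRv
        by_cases hwu : w = u
        · subst hwu
          have := hgub v
          omega
        · have : u = w := key u hu w hw
            (SimpleGraph.Walk.cons huv (SimpleGraph.Walk.cons hadj SimpleGraph.Walk.nil))
            (by simp)
          exact absurd this.symm hwu
      · simp only [hg', if_pos hu, if_neg hv, if_neg hRv]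
        intro heq
        exact hRv ⟨u, hu, huv.symm, heq.symm⟩
    have main : ∀ u v, G.Adj u v → u ∉ Q i → v ∉ Q i → g' u ≠ g' v := by
      intro u v huv hu hv
      by_cases hRu : R u <;> by_cases hRv : R v
      · simp only [hg', if_neg hu, if_neg hv, if_pos hRu, if_pos hRv]
        intro _
        obtain ⟨w, hw, haw, hew⟩ := hRu
        obtain ⟨x, hx, hax, hex⟩ := hRv
        by_cases hwx : w = x
        · subst hwx
          exact hg1 u v huv (hew.trans hex.symm)
        · exact hwx (key w hw x hx
            (SimpleGraph.Walk.cons haw.symm (SimpleGraph.Walk.cons huv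
              (SimpleGraph.Walk.cons hax SimpleGraph.Walk.nil))) (by simp))
      · simp only [hg', if_neg hu, if_neg hv, if_pos hRu, if_neg hRv]
        have := hgub v; omega
      · simp only [hg', if_neg hu, if_neg hv, if_neg hRu, if_pos hRv]
        have := hgub u; omega
      · simp only [hg', if_neg hu, if_neg hv, if_neg hRu, if_neg hRv]
        exact hg1 u v huv
    refine ⟨g', ?_, ?_, ?_⟩
    · intro u v huv
      by_cases hu : u ∈ Q i
      · exact cross u v huv hu
      by_cases hv : v ∈ Q i
      · exact (cross v u huv.symm hv).symm
      · exact main u v huv hu hv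
    · intro v
      simp only [hg', Finset.mem_Icc]
      by_cases hv : v ∈ Q i
      · simp only [if_pos hv]
        have := hdub v hv; omega
      by_cases hRv : R v
      · simp only [if_neg hv, if_pos hRv]; omega
      · simp only [if_neg hv, if_neg hRv]
        have := hgub v; omega
    · intro j hj v hv
      by_cases hji : j = i
      · subst hji
        simp only [hg', if_pos hv]
      · have hjm : (j : ℕ) ≤ m := by
          have : (j : ℕ) ≠ m + 1 := fun h => hji (Fin.ext h)
          omega
        have hvni : v ∉ Q i := Set.disjoint_left.mp (hdisj j i hji) hv
        have hgv : g v = d v := hg3 j hjm v hv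
        have hnR : ¬ R v := by
          rintro ⟨w, hw, haw, hew⟩
          exact hd v (hQP j v hv) w (hQP i w hw) haw (hgv.symm.trans hew)
        simp only [hg', if_neg hvni, if_neg hnR]
        exact hgv
end

section
/- Let n and t be positive integers with t ≤ ⌊n/2⌋, and define h_n(t) = (t-1)(2n-t)/2 if t < 2(n+1)/5 and h_n(t) = (t-1)(2t-1) if t ≥ 2(n+1)/5. If G is a graph of order n with more than h_n(t) edges, then G contains a matching of order t. -/
/-- A matching of a graph: a pairwise disjoint set of its edges. -/
def IsMatchingOn {V : Type*} (G : SimpleGraph V) (M : Set (Sym2 V)) : Prop :=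
  M ⊆ G.edgeSet ∧ M.Pairwise fun e f => ∀ v, v ∈ e → v ∉ f

/-- The extremal function h_n(t). -/
def hfun (n t : ℕ) : ℕ :=
  if 5 * t < 2 * (n + 1) then (t - 1) * (2 * n - t) / 2 else (t - 1) * (2 * t - 1)

/-!
Induction on the number `n` of non-isolated vertices. If fewer than `2t` vertices are
non-isolated, `G` has at most `C(2t-1, 2) = (t-1)(2t-1) ≤ h_n(t)` edges. If every non-isolated
vertex has degree at least `t`, a matching `M` with `|M| < t` can always be enlarged: there are two
vertices `u, v` outside `V(M)`, all their neighbours lie in `V(M)` (otherwise add an edge), and as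
`deg u + deg v ≥ 2t > 2|M|`, some `xy ∈ M` sends three edges to `{u, v}`, so that `xy` can be
replaced by `ux, vy`. Otherwise some non-isolated `v` has degree `< t`. If `5t ≤ 2n`, delete `v`:
this costs at most `t - 1 ≤ h_n(t) - h_{n-1}(t)` edges. If `5t > 2n`, delete `v` and a neighbour
`u`: this costs at most `n + t - 3 ≤ h_n(t) - h_{n-2}(t-1)` edges, and `uv` extends the matching of
size `t - 1` found in what is left.
-/

open Finset SimpleGraph

/-- With `t = a + 1` and `n = 2t + k` no truncated subtraction is left, and the threshold
`5t < 2(n+1)` becomes `a ≤ 2k`. -/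
lemma hfun_two_mul_add (a k : ℕ) : hfun (2 * (a + 1) + k) (a + 1) =
    if a ≤ 2 * k then a * (3 * a + 3 + 2 * k) / 2 else a * (2 * a + 1) := by
  have hcond : 5 * (a + 1) < 2 * (2 * (a + 1) + k + 1) ↔ a ≤ 2 * k := by omega
  have hsub : 2 * (2 * (a + 1) + k) - (a + 1) = 3 * a + 3 + 2 * k := by omega
  have hsub' : 2 * (a + 1) - 1 = 2 * a + 1 := by omega
  simp only [hfun, hcond, hsub, hsub', Nat.add_sub_cancel]

lemma choose_two_le_hfun {s n t : ℕ} (hs : s < 2 * t) (h : 2 * t ≤ n) :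
    s.choose 2 ≤ hfun n t := by
  obtain ⟨a, rfl⟩ : ∃ a, t = a + 1 := ⟨t - 1, by omega⟩
  obtain ⟨k, rfl⟩ : ∃ k, n = 2 * (a + 1) + k := ⟨n - 2 * (a + 1), by omega⟩
  calc s.choose 2 ≤ (2 * a + 1).choose 2 := Nat.choose_le_choose 2 (by omega)
    _ = a * (2 * a + 1) := by
      rw [Nat.choose_two_right, Nat.add_sub_cancel, mul_comm, mul_assoc,
        Nat.mul_div_cancel_left _ two_pos]
    _ ≤ hfun _ _ := by
      rw [hfun_two_mul_add]
      split_ifs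
      · rw [Nat.le_div_iff_mul_le two_pos]
        nlinarith
      · rfl

lemma hfun_pred_add_le {n t : ℕ} (ht : 1 ≤ t) (h : 5 * t ≤ 2 * n) :
    hfun (n - 1) t + (t - 1) ≤ hfun n t := by
  obtain ⟨a, rfl⟩ : ∃ a, t = a + 1 := ⟨t - 1, by omega⟩
  obtain ⟨k, rfl⟩ : ∃ k, n = 2 * (a + 1) + (k + 1) := ⟨n - 2 * (a + 1) - 1, by omega⟩
  rw [show 2 * (a + 1) + (k + 1) - 1 = 2 * (a + 1) + k by omega, Nat.add_sub_cancel,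
    hfun_two_mul_add, hfun_two_mul_add, if_pos (by omega : a ≤ 2 * (k + 1))]
  have hstep : a * (3 * a + 3 + 2 * (k + 1)) = a * (3 * a + 3 + 2 * k) + 2 * a := by ring
  split_ifs
  · omega
  · have : 2 * (a * (2 * a + 1) + a) ≤ a * (3 * a + 3 + 2 * (k + 1)) := by nlinarith
    omega

lemma hfun_sub_two_add_le {n t : ℕ} (ht : 2 ≤ t) (h : 2 * t ≤ n) (h' : 2 * n < 5 * t) :
    hfun (n - 2) (t - 1) + (n + t - 3) ≤ hfun n t := by
  obtain ⟨a, rfl⟩ : ∃ a, t = a + 1 + 1 := ⟨t - 2, by omega⟩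
  obtain ⟨k, rfl⟩ : ∃ k, n = 2 * (a + 1 + 1) + k := ⟨n - 2 * (a + 2), by omega⟩
  rw [show 2 * (a + 1 + 1) + k - 2 = 2 * (a + 1) + k by omega,
    show 2 * (a + 1 + 1) + k + (a + 1 + 1) - 3 = 3 * a + 3 + k by omega,
    Nat.add_sub_cancel, hfun_two_mul_add, hfun_two_mul_add]
  split_ifs
  · have : a * (3 * a + 3 + 2 * k) + 2 * (3 * a + 3 + k)
        ≤ (a + 1) * (3 * (a + 1) + 3 + 2 * k) := by nlinarith
    omega
  · have : 2 * (a * (3 * a + 3 + 2 * k)) + 4 * (3 * a + 3 + k)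
        ≤ 4 * ((a + 1) * (2 * (a + 1) + 1)) := by nlinarith
    omega
  · omega
  · nlinarith

section

variable {V : Type*}

namespace Finset

variable [DecidableEq V] {x y : V}

lemma card_inter_pair (hxy : x ≠ y) (A : Finset V) :
    #(A ∩ {x, y}) = (if x ∈ A then 1 else 0) + (if y ∈ A then 1 else 0) := by
  split_ifs <;> simp [*, inter_insert_of_mem, inter_insert_of_notMem]

lemma cross_mem_of_two_lt_card_inter_pair_add (hxy : x ≠ y) {A B : Finset V}
    (h : 2 < #(A ∩ {x, y}) + #(B ∩ {x, y})) : (x ∈ A ∧ y ∈ B) ∨ (y ∈ A ∧ x ∈ B) := by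
  rw [card_inter_pair hxy, card_inter_pair hxy] at h
  split_ifs at h <;> simp_all

lemma card_biUnion_toFinset_le (M : Finset (Sym2 V)) : #(M.biUnion Sym2.toFinset) ≤ 2 * #M := by
  refine card_biUnion_le.trans ?_
  rw [mul_comm, ← smul_eq_mul, ← sum_const]
  refine sum_le_sum fun e _ => ?_
  rw [Sym2.card_toFinset]
  split_ifs <;> norm_num

lemma notMem_of_notMem_biUnion_toFinset {M : Finset (Sym2 V)} {w : V} {e : Sym2 V}
    (hw : w ∉ M.biUnion Sym2.toFinset) (he : e ∈ M) : w ∉ e := fun hwe =>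
  hw (mem_biUnion.2 ⟨e, he, Sym2.mem_toFinset.2 hwe⟩)

end Finset

namespace SimpleGraph

variable {G : SimpleGraph V}

lemma notMem_of_mem_edgeSet_deleteIncidenceSet {x : V} {e : Sym2 V}
    (he : e ∈ (G.deleteIncidenceSet x).edgeSet) : x ∉ e := by
  rw [edgeSet_deleteIncidenceSet] at he
  exact fun hx => he.2 ⟨he.1, hx⟩

variable [Fintype V] [DecidableRel G.Adj]

lemma card_edgeFinset_le_card_support_choose_two :
    #G.edgeFinset ≤ (Fintype.card G.support).choose 2 := by
  rw [← card_edgeFinset_induce_support]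
  exact card_edgeFinset_le_card_choose_two

lemma degree_le_card_support_sub_one (v : V) : G.degree v ≤ Fintype.card G.support - 1 := by
  by_cases hv : v ∈ G.support
  · have := (G.induce G.support).degree_lt_card_verts ⟨v, hv⟩
    simp only [degree_induce_support] at this
    omega
  · rw [(G.degree_eq_zero_iff_notMem_support v).2 hv]
    exact Nat.zero_le _

lemma card_support_deleteIncidenceSet_deleteIncidenceSet [DecidableEq V] {u v : V}
    (h : G.Adj u v) :
    Fintype.card ((G.deleteIncidenceSet u).deleteIncidenceSet v).support
      ≤ Fintype.card G.support - 2 := by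
  rw [← Set.toFinset_card, ← Set.toFinset_card]
  calc _ ≤ #(G.support.toFinset \ {u, v}) := by
        refine card_le_card fun w hw => ?_
        simp only [Set.mem_toFinset, mem_support, deleteIncidenceSet_adj] at hw
        obtain ⟨z, ⟨⟨hwz, hwu, -⟩, hwv, -⟩⟩ := hw
        simp [hwu, hwv, hwz.mem_support_left]
    _ = _ := by
      rw [card_sdiff_of_subset (by simp [Set.insert_subset_iff, h.mem_support_left,
        h.mem_support_right]), card_pair h.ne]

end SimpleGraph

namespace IsMatchingOn

variable {G G' : SimpleGraph V} {M N : Set (Sym2 V)}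

lemma empty (G : SimpleGraph V) : IsMatchingOn G ∅ :=
  ⟨Set.empty_subset _, Set.pairwise_empty _⟩

lemma subset (hM : IsMatchingOn G M) (h : N ⊆ M) : IsMatchingOn G N :=
  ⟨h.trans hM.1, hM.2.mono h⟩

lemma mono (hM : IsMatchingOn G M) (h : G ≤ G') : IsMatchingOn G' M :=
  ⟨hM.1.trans (edgeSet_mono h), hM.2⟩

lemma insert (hM : IsMatchingOn G M) {a b : V} (hab : G.Adj a b) (ha : ∀ e ∈ M, a ∉ e)
    (hb : ∀ e ∈ M, b ∉ e) : IsMatchingOn G (insert s(a, b) M) := by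
  refine ⟨Set.insert_subset hab hM.1, hM.2.insert fun f hf _ => ⟨?_, ?_⟩⟩
  · intro v hv
    rcases Sym2.mem_iff.1 hv with rfl | rfl
    exacts [ha f hf, hb f hf]
  · intro v hvf hv
    rcases Sym2.mem_iff.1 hv with rfl | rfl
    exacts [ha f hf hvf, hb f hf hvf]

variable [DecidableEq V] {M : Finset (Sym2 V)}

lemma insert_finset (hM : IsMatchingOn G M) {a b : V} (hab : G.Adj a b) (ha : ∀ e ∈ M, a ∉ e)
    (hb : ∀ e ∈ M, b ∉ e) :
    IsMatchingOn G ↑(Insert.insert s(a, b) M) ∧ #(Insert.insert s(a, b) M) = #M + 1 :=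
  ⟨by simpa using hM.insert hab ha hb,
    card_insert_of_notMem fun h => ha _ h (Sym2.mem_mk_left a b)⟩

lemma insert_of_deleteIncidenceSet {u v : V}
    (hM : IsMatchingOn ((G.deleteIncidenceSet v).deleteIncidenceSet u) M) (h : G.Adj v u) :
    IsMatchingOn G ↑(Insert.insert s(v, u) M) ∧ #(Insert.insert s(v, u) M) = #M + 1 := by
  have hle := (deleteIncidenceSet_le _ u).trans (G.deleteIncidenceSet_le v)
  refine (hM.mono hle).insert_finset h (fun e he => ?_) (fun e he =>
    notMem_of_mem_edgeSet_deleteIncidenceSet (hM.1 he))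
  exact notMem_of_mem_edgeSet_deleteIncidenceSet
    (edgeSet_mono (deleteIncidenceSet_le _ u) (hM.1 he))

lemma card_eq_sum_card_inter (hM : IsMatchingOn G M) {s : Finset V}
    (hs : s ⊆ M.biUnion Sym2.toFinset) : #s = ∑ e ∈ M, #(s ∩ e.toFinset) := by
  conv_lhs => rw [← inter_eq_left.2 hs, inter_biUnion]
  refine card_biUnion fun e he f hf hef => ?_
  refine (Finset.disjoint_left.2 fun v hve hvf => ?_).mono inter_subset_right inter_subset_right
  exact hM.2 he hf hef v (Sym2.mem_toFinset.1 hve) (Sym2.mem_toFinset.1 hvf)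

lemma exists_card_succ_of_swap (hM : IsMatchingOn G M) {u v x y : V} (huv : u ≠ v)
    (hu : ∀ e ∈ M, u ∉ e) (hv : ∀ e ∈ M, v ∉ e) (hxy : s(x, y) ∈ M) (hux : G.Adj u x)
    (hvy : G.Adj v y) : ∃ M' : Finset (Sym2 V), IsMatchingOn G M' ∧ #M' = #M + 1 := by
  have hM₀ : IsMatchingOn G ↑(M.erase s(x, y)) := hM.subset (coe_subset.2 (erase_subset _ _))
  have hfree : ∀ w ∈ s(x, y), ∀ e ∈ M.erase s(x, y), w ∉ e := fun w hw e he =>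
    hM.2 hxy (mem_of_mem_erase he) (ne_of_mem_erase he).symm w hw
  obtain ⟨hM₁, hcard₁⟩ := hM₀.insert_finset hvy (fun e he => hv e (mem_of_mem_erase he))
    (hfree y (Sym2.mem_mk_right x y))
  have hy : u ≠ y := fun h => hu _ hxy (h ▸ Sym2.mem_mk_right x y)
  have hx : v ≠ x := fun h => hv _ hxy (h ▸ Sym2.mem_mk_left x y)
  have hxy' : x ≠ y := G.ne_of_adj (hM.1 hxy)
  obtain ⟨hM₂, hcard₂⟩ := hM₁.insert_finset hux
    (by simp only [mem_insert, forall_eq_or_imp, Sym2.mem_iff]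
        exact ⟨by tauto, fun e he => hu e (mem_of_mem_erase he)⟩)
    (by simp only [mem_insert, forall_eq_or_imp, Sym2.mem_iff]
        exact ⟨by tauto, hfree x (Sym2.mem_mk_left x y)⟩)
  exact ⟨_, hM₂, by rw [hcard₂, hcard₁, card_erase_add_one hxy]⟩

lemma exists_card_succ_of_two_mul_card_lt [Fintype V] [DecidableRel G.Adj]
    (hM : IsMatchingOn G M) {u v : V} (huv : u ≠ v) (hu : u ∉ M.biUnion Sym2.toFinset)
    (hv : v ∉ M.biUnion Sym2.toFinset) (hNu : G.neighborFinset u ⊆ M.biUnion Sym2.toFinset)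
    (hNv : G.neighborFinset v ⊆ M.biUnion Sym2.toFinset)
    (hlt : 2 * #M < G.degree u + G.degree v) :
    ∃ M' : Finset (Sym2 V), IsMatchingOn G M' ∧ #M' = #M + 1 := by
  have hfree : ∀ w ∉ M.biUnion Sym2.toFinset, ∀ e ∈ M, w ∉ e := fun w hw e he =>
    notMem_of_notMem_biUnion_toFinset hw he
  obtain ⟨e, he, hlt⟩ : ∃ e ∈ M, 2 <
      #(G.neighborFinset u ∩ e.toFinset) + #(G.neighborFinset v ∩ e.toFinset) := by
    refine exists_lt_of_sum_lt ?_
    rwa [sum_add_distrib, ← hM.card_eq_sum_card_inter hNu, ← hM.card_eq_sum_card_inter hNv,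
      sum_const, smul_eq_mul, card_neighborFinset_eq_degree, card_neighborFinset_eq_degree,
      mul_comm]
  induction e using Sym2.ind with
  | _ x y =>
  rw [Sym2.toFinset_mk_eq] at hlt
  rcases cross_mem_of_two_lt_card_inter_pair_add (G.ne_of_adj (hM.1 he)) hlt with
    ⟨hx, hy⟩ | ⟨hy, hx⟩
  · exact hM.exists_card_succ_of_swap huv (hfree u hu) (hfree v hv) he
      ((G.mem_neighborFinset _ _).1 hx) ((G.mem_neighborFinset _ _).1 hy)
  · exact hM.exists_card_succ_of_swap huv (hfree u hu) (hfree v hv) (Sym2.eq_swap ▸ he)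
      ((G.mem_neighborFinset _ _).1 hy) ((G.mem_neighborFinset _ _).1 hx)

lemma exists_card_succ [Fintype V] [DecidableRel G.Adj] {t : ℕ}
    (hdeg : ∀ v ∈ G.support, t ≤ G.degree v) (hsupp : 2 * t ≤ Fintype.card G.support)
    (hM : IsMatchingOn G M) (hMt : #M < t) :
    ∃ M' : Finset (Sym2 V), IsMatchingOn G M' ∧ #M' = #M + 1 := by
  have hC := card_biUnion_toFinset_le M
  set C := M.biUnion Sym2.toFinset
  have hsdiff : 1 < #(G.support.toFinset \ C) := by
    have := le_card_sdiff C G.support.toFinset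
    rw [Set.toFinset_card] at this
    omega
  obtain ⟨u, hu, v, hv, huv⟩ := one_lt_card.1 hsdiff
  rw [mem_sdiff, Set.mem_toFinset] at hu hv
  by_cases hN : ∀ w ∉ C, G.neighborFinset w ⊆ C
  · refine hM.exists_card_succ_of_two_mul_card_lt huv hu.2 hv.2 (hN u hu.2) (hN v hv.2) ?_
    have := hdeg u hu.1
    have := hdeg v hv.1
    omega
  · simp only [not_forall, not_subset] at hN
    obtain ⟨w, hw, z, hz, hzC⟩ := hN
    exact ⟨_, hM.insert_finset ((G.mem_neighborFinset w z).1 hz)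
      (fun e he => notMem_of_notMem_biUnion_toFinset hw he)
      (fun e he => notMem_of_notMem_biUnion_toFinset hzC he)⟩

end IsMatchingOn

lemma exists_isMatchingOn_card_eq_of_le_degree [Fintype V] [DecidableEq V]
    {G : SimpleGraph V} [DecidableRel G.Adj] {t : ℕ} (hdeg : ∀ v ∈ G.support, t ≤ G.degree v)
    (hsupp : 2 * t ≤ Fintype.card G.support) :
    ∃ M : Finset (Sym2 V), IsMatchingOn G M ∧ #M = t := by
  suffices ∀ k ≤ t, ∃ M : Finset (Sym2 V), IsMatchingOn G M ∧ #M = k from this t le_rfl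
  intro k hk
  induction k with
  | zero => exact ⟨∅, by simpa using IsMatchingOn.empty G, card_empty⟩
  | succ k ih =>
    obtain ⟨M, hM, rfl⟩ := ih (by omega)
    exact hM.exists_card_succ hdeg hsupp (by omega)

theorem exists_isMatchingOn_card_eq_of_hfun_lt [Fintype V] [DecidableEq V] {n t : ℕ}
    (ht : 1 ≤ t) (htn : 2 * t ≤ n) (G : SimpleGraph V) [DecidableRel G.Adj]
    (hsupp : Fintype.card G.support ≤ n) (hE : hfun n t < #G.edgeFinset) :
    ∃ M : Finset (Sym2 V), IsMatchingOn G M ∧ #M = t := by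
  induction n using Nat.strong_induction_on generalizing t G with
  | _ n ih =>
  have hs : 2 * t ≤ Fintype.card G.support := by
    by_contra! hs
    exact hE.not_ge (card_edgeFinset_le_card_support_choose_two.trans (choose_two_le_hfun hs htn))
  by_cases hdeg : ∀ v ∈ G.support, t ≤ G.degree v
  · exact exists_isMatchingOn_card_eq_of_le_degree hdeg hs
  push Not at hdeg
  obtain ⟨v, hv, hvt⟩ := hdeg
  have hsupp₁ := card_support_deleteIncidenceSet G hv
  have hE₁ := card_edgeFinset_deleteIncidenceSet G v
  rcases le_or_gt (5 * t) (2 * n) with hsparse | hdense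
  · have := hfun_pred_add_le ht hsparse
    obtain ⟨M, hM, hMt⟩ := ih (n - 1) (by omega) ht (by omega) (G.deleteIncidenceSet v)
      (by omega) (by omega)
    exact ⟨M, hM.mono (G.deleteIncidenceSet_le v), hMt⟩
  · have ht2 : 2 ≤ t := by have := (G.degree_pos_iff_mem_support v).2 hv; omega
    obtain ⟨u, hvu⟩ := G.mem_support.1 hv
    have hdeg₁ := (G.deleteIncidenceSet v).degree_le_card_support_sub_one u
    have hE₂ := card_edgeFinset_deleteIncidenceSet (G.deleteIncidenceSet v) u
    have hsupp₂ := card_support_deleteIncidenceSet_deleteIncidenceSet hvu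
    have := hfun_sub_two_add_le ht2 htn hdense
    obtain ⟨M, hM, hMt⟩ := ih (n - 2) (by omega) (t := t - 1) (by omega) (by omega)
      ((G.deleteIncidenceSet v).deleteIncidenceSet u) (by omega) (by omega)
    obtain ⟨hM', hcard⟩ := hM.insert_of_deleteIncidenceSet hvu
    exact ⟨_, hM', by omega⟩

end

/-- A graph of order n with more than h_n(t) edges contains a matching of
order t, provided 1 ≤ t ≤ ⌊n/2⌋. -/
theorem stmt_5 {V : Type*} [Fintype V] (n t : ℕ) (ht : 1 ≤ t) (htn : t ≤ n / 2)
    (G : SimpleGraph V) (hn : Fintype.card V = n)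
    (hE : hfun n t < G.edgeSet.ncard) :
    ∃ M : Set (Sym2 V), IsMatchingOn G M ∧ M.ncard = t := by
  classical
  rw [← coe_edgeFinset, Set.ncard_coe_finset] at hE
  obtain ⟨M, hM, hMt⟩ := exists_isMatchingOn_card_eq_of_hfun_lt ht (by omega) G
    (hn ▸ Fintype.card_subtype_le _) hE
  exact ⟨M, hM, by rw [Set.ncard_coe_finset, hMt]⟩
end

section
/- Let r and k be positive integers with r+k even and k ≤ r, let H be the complete graph on vertex set {1,...,r+k}, and let (E_0, E_1, E_2) be an ordered partition of E(H). If |E_1| + 2|E_2| < 2(r+k-1), then H contains a perfect matching M with M ∩ E_2 = ∅ and |M ∩ E_1| ≤ 1. -/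
private theorem stmt_9_aux (n : ℕ) (hn : 2 ≤ n) (heven : Even n)
    (E1 E2 : Set (Sym2 (Fin n)))
    (hE1 : E1 ⊆ (⊤ : SimpleGraph (Fin n)).edgeSet)
    (hE2 : E2 ⊆ (⊤ : SimpleGraph (Fin n)).edgeSet)
    (hE : E1.ncard + 2 * E2.ncard < 2 * (n - 1)) :
    ∃ M : Set (Sym2 (Fin n)), IsMatchingOn (⊤ : SimpleGraph (Fin n)) M ∧
      (∀ v, ∃ e ∈ M, v ∈ e) ∧ M ∩ E2 = ∅ ∧ (M ∩ E1).ncard ≤ 1 := by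
  classical
  set m := n - 1 with hmdef
  have hnm : n = m + 1 := by omega
  have hmodd : Odd m := by
    rcases heven with ⟨t, ht⟩; exact ⟨t - 1, by omega⟩
  haveI : NeZero m := ⟨by omega⟩
  have hcard : Fintype.card (Fin n) = Fintype.card (Option (ZMod m)) := by
    simp [ZMod.card]; omega
  let φ : Fin n ≃ Option (ZMod m) := Fintype.equivOfCardEq hcard
  have two_cancel : ∀ a b : ZMod m, 2 * a = 2 * b → a = b := by
    have hu : IsUnit (2 : ZMod m) := by
      rw [show ((2:ZMod m) = ((2:ℕ) : ZMod m)) by norm_num, ZMod.isUnit_iff_coprime]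
      exact Nat.coprime_two_left.mpr hmodd
    intro a b h
    exact hu.mul_left_cancel h
  let σ : ZMod m → Option (ZMod m) → Option (ZMod m) := fun i x =>
    x.elim (some i) (fun a => if a = i then none else some (2*i - a))
  have σ_invol : ∀ i x, σ i (σ i x) = x := by
    intro i x
    match x with
    | none => simp [σ]
    | some a =>
      by_cases h : a = i
      · simp [σ, h]
      · have h2 : ¬ (2*i - a = i) := by
          intro he; apply h; linear_combination -he
        simp [σ, h, h2]
  have σ_ne : ∀ i x, σ i x ≠ x := by
    intro i x
    match x with
    | none => simp [σ]
    | some a =>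
      by_cases h : a = i
      · simp [σ, h]
      · simp [σ, h]
        intro he
        exact h ((two_cancel i a (by linear_combination he)).symm)
  have σ_unique : ∀ x y : Option (ZMod m), x ≠ y → ∃! i, σ i x = y := by
    intro x y hxy
    match x, y with
    | none, none => exact absurd rfl hxy
    | none, some b => exact ⟨b, by simp [σ], fun i hi => by simpa [σ] using hi⟩
    | some a, none =>
      refine ⟨a, by simp [σ], fun i hi => ?_⟩
      by_cases h : a = i
      · exact h.symm
      · simp [σ, h] at hi
    | some a, some b =>
      have hab : a ≠ b := fun h => hxy (by rw [h])
      obtain ⟨i0, hi0⟩ : ∃ i0 : ZMod m, 2 * i0 = a + b := by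
        have hu : IsUnit (2 : ZMod m) := by
          rw [show ((2:ZMod m) = ((2:ℕ) : ZMod m)) by norm_num, ZMod.isUnit_iff_coprime]
          exact Nat.coprime_two_left.mpr hmodd
        obtain ⟨u, hu⟩ := hu
        exact ⟨u⁻¹ * (a + b), by rw [← hu]; rw [← mul_assoc]; simp [← hu]⟩
      have hai0 : a ≠ i0 := by
        intro h
        apply hab
        rw [← h] at hi0; linear_combination hi0
      refine ⟨i0, ?_, ?_⟩
      · simp [σ, hai0]
        linear_combination hi0
      · intro i hi
        by_cases h : a = i
        · simp [σ, h] at hi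
        · simp [σ, h] at hi
          apply two_cancel
          rw [hi0]; linear_combination hi
  -- the involutions on Fin n
  let τ : ZMod m → Fin n → Fin n := fun i v => φ.symm (σ i (φ v))
  have τ_invol : ∀ i v, τ i (τ i v) = v := by
    intro i v; simp [τ, σ_invol]
  have τ_ne : ∀ i v, τ i v ≠ v := by
    intro i v h
    exact σ_ne i (φ v) (by simpa [τ, Equiv.symm_apply_eq] using h)
  have τ_unique : ∀ u v : Fin n, u ≠ v → ∃! i, τ i u = v := by
    intro u v huv
    obtain ⟨i, hi, hiu⟩ := σ_unique (φ u) (φ v) (fun h => huv (φ.injective h))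
    refine ⟨i, by simp [τ, hi], fun j hj => hiu j ?_⟩
    simpa [τ, Equiv.symm_apply_eq] using hj
  -- the matchings
  let M : ZMod m → Set (Sym2 (Fin n)) := fun i => {e | ∃ v, e = s(v, τ i v)}
  have mem_M : ∀ (i) (u v : Fin n), s(u, v) ∈ M i ↔ τ i u = v := by
    intro i u v
    constructor
    · rintro ⟨w, hw⟩
      rw [Sym2.eq_iff] at hw
      rcases hw with ⟨rfl, rfl⟩ | ⟨rfl, rfl⟩
      · rfl
      · exact τ_invol i v
    · intro h; exact ⟨u, by rw [h]⟩
  have hM_match : ∀ i, IsMatchingOn (⊤ : SimpleGraph (Fin n)) (M i) := by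
    intro i
    constructor
    · rintro e ⟨v, rfl⟩
      simp [SimpleGraph.mem_edgeSet]
      exact fun h => τ_ne i v h.symm
    · rintro e ⟨u, rfl⟩ f ⟨v, rfl⟩ hef w hwe hwf
      apply hef
      simp only [Sym2.mem_iff] at hwe hwf
      rcases hwe with rfl | rfl <;> rcases hwf with h | h
      · rw [h]
      · rw [h, τ_invol, Sym2.eq_swap]
      · rw [← h, τ_invol, Sym2.eq_swap]
      · have huv : u = v := by rw [← τ_invol i u, h, τ_invol]
        rw [huv]
  have hM_perfect : ∀ i (v : Fin n), ∃ e ∈ M i, v ∈ e := by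
    intro i v
    exact ⟨s(v, τ i v), ⟨v, rfl⟩, by simp⟩
  have hM_unique : ∀ e ∈ (⊤ : SimpleGraph (Fin n)).edgeSet, ∃! i, e ∈ M i := by
    intro e he
    induction e with
    | _ u v =>
      rw [SimpleGraph.mem_edgeSet] at he
      obtain ⟨i, hi, hiu⟩ := τ_unique u v (by simpa using he)
      exact ⟨i, (mem_M i u v).2 hi, fun j hj => hiu j ((mem_M j u v).1 hj)⟩
  -- counting
  have ncard_sum : ∀ S : Set (Sym2 (Fin n)), S.ncard = ∑ e : Sym2 (Fin n), if e ∈ S then 1 else 0 := by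
    intro S
    rw [Set.ncard_eq_toFinset_card' S, Finset.sum_boole]
    simp [Set.toFinset]
  have key : ∀ A : Set (Sym2 (Fin n)), A ⊆ (⊤ : SimpleGraph (Fin n)).edgeSet →
      ∑ i : ZMod m, (M i ∩ A).ncard = A.ncard := by
    intro A hA
    simp only [ncard_sum]
    rw [Finset.sum_comm]
    apply Finset.sum_congr rfl
    intro e _
    by_cases he : e ∈ A
    · obtain ⟨i0, hi0, hiu⟩ := hM_unique e (hA he)
      rw [if_pos he]
      rw [Finset.sum_eq_single i0]
      · simp [hi0, he]
      · intro j _ hj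
        rw [if_neg]
        rintro ⟨hj1, -⟩
        exact hj (hiu j hj1)
      · simp
    · simp [he]
  -- pigeonhole
  have hsum : ∑ i : ZMod m, ((M i ∩ E1).ncard + 2 * (M i ∩ E2).ncard)
      = E1.ncard + 2 * E2.ncard := by
    rw [Finset.sum_add_distrib, ← Finset.mul_sum, key E1 hE1, key E2 hE2]
  have hlt : ∑ i : ZMod m, ((M i ∩ E1).ncard + 2 * (M i ∩ E2).ncard)
      < ∑ _i : ZMod m, 2 := by
    rw [hsum, Finset.sum_const, Finset.card_univ, ZMod.card, smul_eq_mul]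
    omega
  obtain ⟨i, -, hi⟩ := Finset.exists_lt_of_sum_lt hlt
  refine ⟨M i, hM_match i, hM_perfect i, ?_, ?_⟩
  · have : (M i ∩ E2).ncard = 0 := by omega
    rw [Set.ncard_eq_zero (Set.toFinite _)] at this
    exact this
  · omega

/-- if r+k is even, k ≤ r and |E1| + 2|E2| < 2(r+k-1), the complete graph
on r+k vertices has a perfect matching which is good for (E0,E1,E2). -/
theorem stmt_9 (r k : ℕ) (hr : 1 ≤ r) (hk : 1 ≤ k) (hkr : k ≤ r)
    (heven : Even (r + k))
    (E0 E1 E2 : Set (Sym2 (Fin (r + k))))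
    (hpart : (⊤ : SimpleGraph (Fin (r + k))).edgeSet = E0 ∪ E1 ∪ E2)
    (h01 : Disjoint E0 E1) (h02 : Disjoint E0 E2) (h12 : Disjoint E1 E2)
    (hE : E1.ncard + 2 * E2.ncard < 2 * (r + k - 1)) :
    ∃ M : Set (Sym2 (Fin (r + k))), IsMatchingOn (⊤ : SimpleGraph (Fin (r + k))) M ∧
      (∀ v, ∃ e ∈ M, v ∈ e) ∧ M ∩ E2 = ∅ ∧ (M ∩ E1).ncard ≤ 1 := by
  apply stmt_9_aux (r + k) (by omega) heven E1 E2
  · intro e he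
    rw [hpart]
    exact Or.inl (Or.inr he)
  · intro e he
    rw [hpart]
    exact Or.inr he
  · exact hE
end

section
/- Let r and k be positive integers with k > r, G a graph with chromatic number at most r, P ⊆ V(G), and d : P → {1,...,r+k} a proper coloring of G[P]. Let H be the complete graph on the color set {1,...,r+k} with ordered partition (E_0^d, E_1^d, E_2^d) of E(H) defined by the multiplicities with which color pairs occur among pairs of D_G(P,2). If H has a good matching for (E_0^d,E_1^d,E_2^d) of order r, then d can be extended to a proper (r+k)-coloring of G. -/
/-- The edges of the complete graph on the color set {1,…,n}. -/
def colorEdge (n : ℕ) : Set (Sym2 ℕ) :=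
  {e | ¬ e.IsDiag ∧ ∀ i ∈ e, i ∈ Finset.Icc 1 n}

/-- φ(e): the number of pairs in D_G(P,2) whose colors under d form the pair e. -/
noncomputable def phi {V : Type*} (G : SimpleGraph V) (P : Set V) (d : V → ℕ)
    (e : Sym2 ℕ) : ℕ :=
  (pairsAtMost G P 2 ∩ {p | Sym2.map d p = e}).ncard

private lemma sym2_rep {α : Type*} (z : Sym2 α) : ∃ x y, z = s(x, y) :=
  Sym2.ind (fun x y => ⟨x, y, rfl⟩) z

/-- Assembly lemma: given an `r`-coloring `C` and an injective assignment `σ` of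
matching edges to color classes such that no uncolored vertex sees both endpoints
of its assigned edge among its precolored neighbors, we can extend `d`. -/
private lemma assemble {V : Type*} [Fintype V] {r n : ℕ}
    (G : SimpleGraph V) (P : Set V) (d : V → ℕ)
    (hd : ∀ x ∈ P, ∀ y ∈ P, G.Adj x y → d x ≠ d y)
    (hdr : ∀ x ∈ P, d x ∈ Finset.Icc 1 n)
    (M : Set (Sym2 ℕ)) (hMe : M ⊆ colorEdge n)
    (hMm : M.Pairwise fun e f => ∀ v, v ∈ e → v ∉ f)
    (C : G.Coloring (Fin r)) (σ : Fin r → Sym2 ℕ)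
    (hσ1 : ∀ i, σ i ∈ M) (hσ2 : Function.Injective σ)
    (hσ3 : ∀ v, v ∉ P → ∀ x' y', x' ∈ P → y' ∈ P → G.Adj v x' → G.Adj v y' →
      x' ≠ y' → s(d x', d y') = σ (C v) → False) :
    ∃ f : V → ℕ, (∀ u v, G.Adj u v → f u ≠ f v) ∧
      (∀ v, f v ∈ Finset.Icc 1 n) ∧ ∀ x ∈ P, f x = d x := by
  classical
  have key : ∀ v, v ∉ P → ∃ a, a ∈ σ (C v) ∧ ∀ z ∈ P, G.Adj v z → d z ≠ a := by
    intro v hv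
    obtain ⟨a, b, hab⟩ := sym2_rep (σ (C v))
    have hce := hMe (hσ1 (C v))
    have hne : a ≠ b := by
      intro h
      exact hce.1 (by rw [hab, h]; exact Sym2.mk_isDiag_iff.mpr rfl)
    by_cases ha : ∀ z ∈ P, G.Adj v z → d z ≠ a
    · exact ⟨a, by rw [hab]; exact Sym2.mem_mk_left a b, ha⟩
    by_cases hb : ∀ z ∈ P, G.Adj v z → d z ≠ b
    · exact ⟨b, by rw [hab]; exact Sym2.mem_mk_right a b, hb⟩
    push_neg at ha hb
    obtain ⟨x', hx'P, hx'adj, hx'⟩ := ha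
    obtain ⟨y', hy'P, hy'adj, hy'⟩ := hb
    exact (hσ3 v hv x' y' hx'P hy'P hx'adj hy'adj
      (by intro h; rw [h, hy'] at hx'; exact hne hx'.symm)
      (by rw [hx', hy', ← hab])).elim
  choose g hg1 hg2 using key
  refine ⟨fun v => if h : v ∈ P then d v else g v h, ?_, ?_, ?_⟩
  · intro u v huv
    by_cases hu : u ∈ P <;> by_cases hv : v ∈ P <;> simp only [hu, hv, dif_pos, dif_neg,
      not_false_iff]
    · exact hd u hu v hv huv
    · exact fun h => hg2 v hv u hu huv.symm h
    · exact (hg2 u hu v hv huv).symm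
    · intro h
      have hne : σ (C u) ≠ σ (C v) := fun hh => C.valid huv (hσ2 hh)
      exact hMm (hσ1 (C u)) (hσ1 (C v)) hne (g u hu) (hg1 u hu) (h ▸ hg1 v hv)
  · intro v
    by_cases h : v ∈ P <;> simp only [h, dif_pos, dif_neg, not_false_iff]
    · exact hdr v h
    · exact (hMe (hσ1 (C v))).2 _ (hg1 v h)
  · intro x hx; simp only [hx, dif_pos]

/-- if k > r and the complete graph on the colors {1,…,r+k} has a good
matching for (E_0^d, E_1^d, E_2^d) of order r, then d extends to an (r+k)-coloring. -/
theorem stmt_15 {V : Type*} [Fintype V] (r k : ℕ) (hr : 1 ≤ r) (hk : r < k)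
    (G : SimpleGraph V) (hχ : G.chromaticNumber ≤ r) (P : Set V)
    (d : V → ℕ) (hd : ∀ x ∈ P, ∀ y ∈ P, G.Adj x y → d x ≠ d y)
    (hdr : ∀ x ∈ P, d x ∈ Finset.Icc 1 (r + k))
    (M : Set (Sym2 ℕ)) (hMe : M ⊆ colorEdge (r + k))
    (hMm : M.Pairwise fun e f => ∀ v, v ∈ e → v ∉ f)
    (hMr : M.ncard = r)
    (hM2 : M ∩ {e | 2 ≤ phi G P d e} = ∅)
    (hM1 : (M ∩ {e | phi G P d e = 1}).ncard ≤ 1) :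
    ∃ f : V → ℕ, (∀ u v, G.Adj u v → f u ≠ f v) ∧
      (∀ v, f v ∈ Finset.Icc 1 (r + k)) ∧ ∀ x ∈ P, f x = d x := by
  obtain ⟨C⟩ := SimpleGraph.chromaticNumber_le_iff_colorable.mp hχ
  have hMfin : M.Finite := by
    by_contra h
    rw [Set.Infinite.ncard h] at hMr
    omega
  have hcard : hMfin.toFinset.card = r := by
    rw [← Set.ncard_eq_toFinset_card M hMfin]; exact hMr
  let ε : Fin r ≃ {x // x ∈ hMfin.toFinset} := (Finset.equivFinOfCardEq hcard).symm
  have hεM : ∀ i, (ε i : Sym2 ℕ) ∈ M := fun i => hMfin.mem_toFinset.mp (ε i).2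
  -- every edge of M realized by a pair has φ exactly 1
  have hphi1 : ∀ e ∈ M, ∀ p ∈ pairsAtMost G P 2, Sym2.map d p = e → phi G P d e = 1 := by
    intro e heM p hp hpe
    have hfin : (pairsAtMost G P 2 ∩ {p | Sym2.map d p = e}).Finite := Set.toFinite _
    have h1 : 0 < phi G P d e := by
      rw [phi, Set.ncard_pos hfin]
      exact ⟨p, hp, hpe⟩
    have h2 : ¬ 2 ≤ phi G P d e := by
      intro h
      exact (Set.eq_empty_iff_forall_notMem.mp hM2 e) ⟨heM, h⟩
    omega
  -- construct a walk-based pair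
  have mkPair : ∀ v x' y', x' ∈ P → y' ∈ P → G.Adj v x' → G.Adj v y' → x' ≠ y' →
      s(x', y') ∈ pairsAtMost G P 2 := by
    intro v x' y' hx'P hy'P hadjx hadjy hne
    exact ⟨x', y', rfl, hx'P, hy'P, hne,
      ⟨SimpleGraph.Walk.cons hadjx.symm (SimpleGraph.Walk.cons hadjy SimpleGraph.Walk.nil),
        by simp⟩⟩
  by_cases hE : ∃ p ∈ pairsAtMost G P 2, Sym2.map d p ∈ M
  · obtain ⟨p, hp, hpM⟩ := hE
    obtain ⟨x, y, hpxy, hxP, hyP, hxy, hw⟩ := hp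
    have hp' : p ∈ pairsAtMost G P 2 := ⟨x, y, hpxy, hxP, hyP, hxy, hw⟩
    set j0 : Fin r := ε.symm ⟨Sym2.map d p, hMfin.mem_toFinset.mpr hpM⟩ with hj0
    set σ : Fin r → Sym2 ℕ := fun i => (ε (Equiv.swap (C x) j0 i) : Sym2 ℕ) with hσ
    have hσ1 : ∀ i, σ i ∈ M := fun i => hεM _
    have hσ2 : Function.Injective σ := fun i j h =>
      (Equiv.swap (C x) j0).injective (ε.injective (Subtype.ext h))
    have hσx : σ (C x) = Sym2.map d p := by
      simp [hσ, hj0, Equiv.swap_apply_left]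
    refine assemble G P d hd hdr M hMe hMm C σ hσ1 hσ2 ?_
    intro v hv x' y' hx'P hy'P hadjx hadjy hne heq
    have hp'' := mkPair v x' y' hx'P hy'P hadjx hadjy hne
    have he1 : phi G P d (σ (C v)) = 1 :=
      hphi1 _ (hσ1 _) _ hp'' (by rw [Sym2.map_pair_eq, heq])
    have he2 : phi G P d (Sym2.map d p) = 1 := hphi1 _ hpM p hp' rfl
    have hee : σ (C v) = Sym2.map d p := by
      by_contra hcon
      have : 1 < (M ∩ {e | phi G P d e = 1}).ncard := by
        rw [Set.one_lt_ncard_iff (hMfin.inter_of_left _)]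
        exact ⟨σ (C v), Sym2.map d p, ⟨hσ1 _, he1⟩, ⟨hpM, he2⟩, hcon⟩
      omega
    -- the φ = 1 set is a singleton containing both p and s(x', y')
    obtain ⟨q, hq⟩ := Set.ncard_eq_one.mp he1
    have hmem1 : s(x', y') ∈ pairsAtMost G P 2 ∩ {p | Sym2.map d p = σ (C v)} :=
      ⟨hp'', by rw [Set.mem_setOf_eq, Sym2.map_pair_eq, heq]⟩
    have hmem2 : p ∈ pairsAtMost G P 2 ∩ {p' | Sym2.map d p' = σ (C v)} :=
      ⟨hp', by rw [Set.mem_setOf_eq, hee]⟩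
    have hpq : s(x', y') = p := by
      rw [hq] at hmem1 hmem2
      rw [Set.mem_singleton_iff.mp hmem1, Set.mem_singleton_iff.mp hmem2]
    have hCvx : C v = C x := hσ2 (by rw [hσx, hee])
    rw [hpxy] at hpq
    rcases Sym2.eq_iff.mp hpq with ⟨h1, _⟩ | ⟨_, h2⟩
    · exact C.valid (h1 ▸ hadjx) hCvx
    · exact C.valid (h2 ▸ hadjy) hCvx
  · refine assemble G P d hd hdr M hMe hMm C (fun i => (ε i : Sym2 ℕ)) hεM
      (fun i j h => ε.injective (Subtype.ext h)) ?_
    intro v hv x' y' hx'P hy'P hadjx hadjy hne heq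
    exact hE ⟨s(x', y'), mkPair v x' y' hx'P hy'P hadjx hadjy hne,
      by rw [Sym2.map_pair_eq, heq]; exact hεM _⟩
end

section
/- Let k and r be positive integers with r ≥ 2, k ≤ r and r+k even. Let G be a graph with chromatic number at most r, P ⊆ V(G), and d : P → {1,...,r+k} a proper coloring of G[P]. If |D_G(P,2)| < 2(r+k−1), then d can be extended to a proper coloring of G using at most (3r+k)/2 colors. -/
/-!
Fix a proper `r`-colouring of `G` and put `n = r + k = 2m`. Split the precolours `1, …, n` into
`m` pairs and hand the `i`-th pair to the `i`-th colour class; each of the remaining `r - m` classes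
gets one fresh colour, so `n + (r - m) = (3r + k) / 2` colours are used. A vertex outside `P` takes
a colour of its class's palette that none of its precoloured neighbours has; this is impossible
only when some vertex of the class sees both colours of its pair. A pair of colours seen together
by a vertex is witnessed by a pair of `D_G(P, 2)`, and by two such pairs if it is seen together in
every class. Averaging over all ways of pairing up the precolours, the bound on `|D_G(P, 2)|`
makes the expected total witness count of the `m` pairs smaller than `2`, so some pairing has at
most one bad pair, and that pair is still usable by some class; giving it to that class finishes
the proof.
-/

open Finset Function

namespace Equiv.Perm

variable {α : Type*} [DecidableEq α]

theorem exists_apply_eq_and_apply_eq {a b a' b' : α} (hab : a ≠ b) (hab' : a' ≠ b') :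
    ∃ τ : Perm α, τ a = a' ∧ τ b = b' := by
  have hne : swap a a' b ≠ a' := by
    intro h
    exact hab ((swap a a').injective (by rw [h, swap_apply_left]))
  exact ⟨swap (swap a a' b) b' * swap a a', by simp [swap_apply_of_ne_of_ne hne.symm hab'],
    by simp⟩

variable [Fintype α]

theorem card_filter_apply_apply_eq {a b : α} (hab : a ≠ b) {p : α × α} (hp : p.1 ≠ p.2) :
    #{π : Perm α | (π a, π b) = p} = #{π : Perm α | (π a, π b) = (a, b)} := by
  obtain ⟨τ, hτa, hτb⟩ := exists_apply_eq_and_apply_eq hab hp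
  refine card_nbij' (τ⁻¹ * ·) (τ * ·) ?_ ?_ ?_ ?_
  · intro π
    simp only [coe_filter, mem_univ, true_and, Set.mem_ofPred_eq, Prod.ext_iff]
    rintro ⟨h₁, h₂⟩
    simp [h₁, h₂, ← hτa, ← hτb]
  · intro π
    simp only [coe_filter, mem_univ, true_and, Set.mem_ofPred_eq, Prod.ext_iff]
    rintro ⟨h₁, h₂⟩
    simp [h₁, h₂, hτa, hτb]
  · intro π _
    simp
  · intro π _
    simp

theorem card_offDiag_mul_sum_apply_apply {a b : α} (hab : a ≠ b) (w : α → α → ℕ) :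
    #(univ : Finset α).offDiag * ∑ π : Perm α, w (π a) (π b) =
      Fintype.card (Perm α) * ∑ p ∈ (univ : Finset α).offDiag, w p.1 p.2 := by
  set N := #{π : Perm α | (π a, π b) = (a, b)}
  have hmaps : ∀ π ∈ (univ : Finset (Perm α)), (π a, π b) ∈ (univ : Finset α).offDiag := by
    simp [hab]
  have hsum (w : α → α → ℕ) :
      ∑ π : Perm α, w (π a) (π b) = N * ∑ p ∈ (univ : Finset α).offDiag, w p.1 p.2 := by
    rw [← sum_fiberwise_of_maps_to hmaps, mul_sum]
    refine sum_congr rfl fun p hp => ?_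
    rw [sum_congr rfl (g := fun _ => w p.1 p.2) fun π hπ => by simp [← (mem_filter.1 hπ).2],
      sum_const, smul_eq_mul, card_filter_apply_apply_eq hab (mem_offDiag.1 hp).2.2]
  have hcard : Fintype.card (Perm α) = N * #(univ : Finset α).offDiag := by
    simpa using hsum fun _ _ => 1
  rw [hsum, hcard]
  ring

theorem exists_sum_apply_apply_lt {J : Type*} [Fintype J] (a b : J → α) (hab : ∀ j, a j ≠ b j)
    (w : α → α → ℕ) (t : ℕ)
    (hw : Fintype.card J * ∑ p ∈ (univ : Finset α).offDiag, w p.1 p.2 <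
      t * #(univ : Finset α).offDiag) :
    ∃ π : Perm α, ∑ j, w (π (a j)) (π (b j)) < t := by
  by_contra! h
  have hpos : 0 < Fintype.card (Perm α) := Fintype.card_pos
  have key : Fintype.card (Perm α) * (t * #(univ : Finset α).offDiag) ≤
      Fintype.card (Perm α) * (Fintype.card J * ∑ p ∈ (univ : Finset α).offDiag, w p.1 p.2) :=
    calc Fintype.card (Perm α) * (t * #(univ : Finset α).offDiag)
        = #(univ : Finset α).offDiag * ∑ _π : Perm α, t := by simp; ring
      _ ≤ #(univ : Finset α).offDiag * ∑ π : Perm α, ∑ j, w (π (a j)) (π (b j)) := by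
        gcongr with π; exact h π
      _ = ∑ j, #(univ : Finset α).offDiag * ∑ π : Perm α, w (π (a j)) (π (b j)) := by
        rw [sum_comm, mul_sum]
      _ = _ := by
        simp only [card_offDiag_mul_sum_apply_apply (hab _), sum_const, card_univ, smul_eq_mul]
        ring
  exact absurd (Nat.le_of_mul_le_mul_left key hpos) (not_le.2 hw)

end Equiv.Perm

theorem Finset.card_filter_eq_sym2_mk_le_two {α β : Type*} [DecidableEq β] {f : α → β}
    (hf : Injective f) (s : Finset (α × α)) (z : Sym2 β) : #{p ∈ s | z = s(f p.1, f p.2)} ≤ 2 := by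
  induction z using Sym2.ind with | _ u v => ?_
  calc #{p ∈ s | s(u, v) = s(f p.1, f p.2)}
      ≤ #({(u, v), (v, u)} : Finset (β × β)) := by
        refine card_le_card_of_injOn (fun p => (f p.1, f p.2)) (fun p hp => ?_) ?_
        · rcases Sym2.eq_iff.1 (mem_filter.1 hp).2 with ⟨h₁, h₂⟩ | ⟨h₁, h₂⟩ <;> simp [h₁, h₂]
        · intro p _ q _ h
          simp only [Prod.mk.injEq] at h
          exact Prod.ext (hf h.1) (hf h.2)
    _ ≤ 2 := card_le_two

theorem Finset.sum_card_filter_sym2_map_eq_le {V α γ : Type*} [DecidableEq γ] (d : V → γ)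
    {f : α → γ} (hf : Injective f) (D : Finset (Sym2 V)) (s : Finset (α × α)) :
    ∑ p ∈ s, #{e ∈ D | e.map d = s(f p.1, f p.2)} ≤ 2 * #D :=
  calc ∑ p ∈ s, #{e ∈ D | e.map d = s(f p.1, f p.2)}
      = ∑ e ∈ D, #{p ∈ s | e.map d = s(f p.1, f p.2)} :=
        sum_card_bipartiteAbove_eq_sum_card_bipartiteBelow _
    _ ≤ ∑ _e ∈ D, 2 := sum_le_sum fun e _ => card_filter_eq_sym2_mk_le_two hf s _
    _ = 2 * #D := by rw [sum_const, smul_eq_mul, mul_comm]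

-- A pair of colours blocked in some class `i` (`B i`) is witnessed by a pair of `D_G(P, 2)`, and
-- by two if it is blocked in every class (`blockCost_blocksPair_le`).
open Classical in
noncomputable def blockCost {ι : Type*} (B : ι → Prop) : ℕ :=
  if ∃ i, B i then if ∀ i, B i then 2 else 1 else 0

open Equiv in
theorem exists_perm_forall_not_of_sum_blockCost_le_one {J ι : Type*} [Fintype J] [DecidableEq ι]
    (B : J → ι → Prop) (e : J → ι) (h : ∑ j, blockCost (B j) ≤ 1) :
    ∃ g : Perm ι, ∀ j, ¬ B j (g (e j)) := by
  classical
  by_cases hex : ∃ j₀ i, B j₀ i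
  · obtain ⟨j₀, i, hi⟩ := hex
    have hpos {j : J} (hj : ∃ i, B j i) : 1 ≤ blockCost (B j) := by
      unfold blockCost; split_ifs <;> simp
    obtain ⟨i₀, hi₀⟩ : ∃ i₀, ¬ B j₀ i₀ := by
      by_contra! hall
      have := (single_le_sum (fun _ _ => Nat.zero_le _) (mem_univ j₀)).trans h
      unfold blockCost at this
      rw [if_pos ⟨i, hi⟩, if_pos hall] at this
      omega
    refine ⟨swap (e j₀) i₀, fun j hj => ?_⟩
    by_cases hjj₀ : j = j₀
    · subst hjj₀
      exact hi₀ (by simpa using hj)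
    · have := (sum_le_sum_of_subset (f := fun j => blockCost (B j)) (subset_univ {j, j₀})).trans h
      rw [sum_pair hjj₀] at this
      have := hpos ⟨_, hj⟩
      have := hpos ⟨_, hi⟩
      omega
  · push Not at hex
    exact ⟨1, fun j => hex j _⟩

def positionColor {n : ℕ} (π : Equiv.Perm (Fin n)) (q : ℕ) : ℕ :=
  if h : q < n then π ⟨q, h⟩ + 1 else q + 1

section positionColor

variable {n : ℕ} (π : Equiv.Perm (Fin n)) {q : ℕ}

theorem positionColor_of_lt (h : q < n) : positionColor π q = π ⟨q, h⟩ + 1 := dif_pos h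

theorem positionColor_of_le (h : n ≤ q) : positionColor π q = q + 1 := dif_neg (not_lt.2 h)

theorem one_le_positionColor : 1 ≤ positionColor π q := by
  unfold positionColor; split <;> omega

theorem positionColor_le : positionColor π q ≤ max n (q + 1) := by
  unfold positionColor; split <;> omega

theorem positionColor_injective : Injective (positionColor π) := by
  intro q q' h
  unfold positionColor at h
  split_ifs at h with hq hq' hq'
  · simpa using π.injective (Fin.ext (by omega : (π ⟨q, hq⟩ : ℕ) = π ⟨q', hq'⟩))
  all_goals omega

end positionColor

section Precoloring

variable {V γ ι : Type*} (G : SimpleGraph V) (P : Set V) (d : V → γ)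

def SeesColor (u : V) (x : γ) : Prop := ∃ a ∈ P, G.Adj u a ∧ d a = x

def BlocksPair (c : V → ι) (i : ι) (x y : γ) : Prop :=
  ∃ u, c u = i ∧ SeesColor G P d u x ∧ SeesColor G P d u y

variable {G P d}

theorem BlocksPair.exists_mk_mem_pairsAtMost {c : V → ι} (hc : ∀ u v, G.Adj u v → c u ≠ c v)
    {i : ι} {x y : γ} (h : BlocksPair G P d c i x y) (hxy : x ≠ y) :
    ∃ a b, s(a, b) ∈ pairsAtMost G P 2 ∧ d a = x ∧ d b = y ∧ c a ≠ i := by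
  obtain ⟨u, rfl, ⟨a, ha, hua, rfl⟩, ⟨b, hb, hub, rfl⟩⟩ := h
  refine ⟨a, b, ⟨a, b, rfl, ha, hb, ?_, .cons hua.symm (.cons hub .nil), by simp⟩, rfl, rfl,
    (hc u a hua).symm⟩
  rintro rfl
  exact hxy rfl

theorem blockCost_blocksPair_le [DecidableEq γ] {c : V → ι} (hc : ∀ u v, G.Adj u v → c u ≠ c v)
    {D : Finset (Sym2 V)} (hD : pairsAtMost G P 2 ⊆ D) {x y : γ} (hxy : x ≠ y) :
    blockCost (BlocksPair G P d c · x y) ≤ #{e ∈ D | e.map d = s(x, y)} := by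
  have mem {a b : V} (hab : s(a, b) ∈ pairsAtMost G P 2) (ha : d a = x) (hb : d b = y) :
      s(a, b) ∈ {e ∈ D | e.map d = s(x, y)} :=
    mem_filter.2 ⟨hD hab, by simp [ha, hb]⟩
  unfold blockCost
  split_ifs with hsome hall
  · obtain ⟨i, hi⟩ := hsome
    obtain ⟨a, b, hab, ha, hb, -⟩ := hi.exists_mk_mem_pairsAtMost hc hxy
    obtain ⟨a', b', hab', ha', hb', hca⟩ := (hall (c a)).exists_mk_mem_pairsAtMost hc hxy
    refine one_lt_card.2 ⟨_, mem hab' ha' hb', _, mem hab ha hb, ?_⟩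
    rw [Ne, Sym2.eq_iff]
    rintro (⟨rfl, -⟩ | ⟨rfl, -⟩)
    · exact hca rfl
    · exact hxy (ha'.symm.trans hb)
  · obtain ⟨i, hi⟩ := hsome
    obtain ⟨a, b, hab, ha, hb, -⟩ := hi.exists_mk_mem_pairsAtMost hc hxy
    exact card_pos.2 ⟨_, mem hab ha hb⟩
  · exact Nat.zero_le _

theorem sum_offDiag_blockCost_le [Finite V] [DecidableEq γ] {α : Type*} [Fintype α]
    [DecidableEq α] {c : V → ι} (hc : ∀ u v, G.Adj u v → c u ≠ c v) {f : α → γ}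
    (hf : Injective f) :
    ∑ p ∈ (univ : Finset α).offDiag, blockCost (BlocksPair G P d c · (f p.1) (f p.2)) ≤
      2 * (pairsAtMost G P 2).ncard := by
  set D := (pairsAtMost G P 2).toFinite.toFinset
  calc ∑ p ∈ (univ : Finset α).offDiag, blockCost (BlocksPair G P d c · (f p.1) (f p.2))
      ≤ ∑ p ∈ (univ : Finset α).offDiag, #{e ∈ D | e.map d = s(f p.1, f p.2)} :=
        sum_le_sum fun p hp =>
          blockCost_blocksPair_le hc (by simp [D]) (hf.ne (mem_offDiag.1 hp).2.2)
    _ ≤ 2 * #D := sum_card_filter_sym2_map_eq_le d hf D _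
    _ = 2 * (pairsAtMost G P 2).ncard := by rw [Set.ncard_eq_toFinset_card]

theorem exists_extension_of_pairwise_disjoint {c : V → ι} (hc : ∀ u v, G.Adj u v → c u ≠ c v)
    (hd : ∀ x ∈ P, ∀ y ∈ P, G.Adj x y → d x ≠ d y) (L : ι → Set γ) (hL : Pairwise (Disjoint on L))
    (hfree : ∀ u ∉ P, ∃ x ∈ L (c u), ¬ SeesColor G P d u x) :
    ∃ f : V → γ, (∀ u v, G.Adj u v → f u ≠ f v) ∧ (∀ v ∉ P, f v ∈ L (c v)) ∧
      ∀ v ∈ P, f v = d v := by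
  classical
  choose g hgL hgfree using hfree
  refine ⟨fun v => if hv : v ∈ P then d v else g v hv, fun u v huv => ?_,
    fun v hv => by simpa [hv] using hgL v hv, fun v hv => by simp [hv]⟩
  by_cases hu : u ∈ P <;> by_cases hv : v ∈ P <;> simp only [hu, hv, dite_true, dite_false]
  · exact hd u hu v hv huv
  · exact fun h => hgfree v hv ⟨u, hu, huv.symm, h⟩
  · exact fun h => hgfree u hu ⟨v, hv, huv, h.symm⟩
  · exact (hL (hc u v huv)).ne_of_mem (hgL u hu) (hgL v hv)

end Precoloring

theorem exists_perm_sum_blockCost_le_one {V ι : Type*} [Finite V] {G : SimpleGraph V}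
    {P : Set V} (d : V → ℕ) {c : V → ι} (hc : ∀ u v, G.Adj u v → c u ≠ c v) {m : ℕ}
    (hD : (pairsAtMost G P 2).ncard < 2 * (m + m - 1)) :
    ∃ π : Equiv.Perm (Fin (m + m)),
      ∑ j : Fin m, blockCost (BlocksPair G P d c · (positionColor π j) (positionColor π (m + j)))
        ≤ 1 := by
  set w : Fin (m + m) → Fin (m + m) → ℕ :=
    fun x y => blockCost (BlocksPair G P d c · (x + 1 : ℕ) (y + 1))
  have hbudget : ∑ p ∈ (univ : Finset (Fin (m + m))).offDiag, w p.1 p.2 ≤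
      2 * (pairsAtMost G P 2).ncard :=
    sum_offDiag_blockCost_le hc fun x y h => Fin.ext (Nat.succ_injective h)
  have hm : 0 < m := by omega
  obtain ⟨π, hπ⟩ := Equiv.Perm.exists_sum_apply_apply_lt
    (fun j : Fin m => (⟨j, by omega⟩ : Fin (m + m))) (fun j => ⟨m + j, by omega⟩)
    (fun j h => by simp [Fin.ext_iff] at h; omega) w 2 <| by
      simp only [offDiag_card, card_univ, Fintype.card_fin]
      calc m * ∑ p ∈ (univ : Finset (Fin (m + m))).offDiag, w p.1 p.2
          < m * (4 * (m + m - 1)) := Nat.mul_lt_mul_of_pos_left (by omega) hm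
        _ = 2 * ((m + m) * (m + m) - (m + m)) := by rw [← Nat.mul_sub_one]; ring
  refine ⟨π, le_of_eq_of_le (sum_congr rfl fun j _ => ?_) (Nat.lt_succ_iff.1 hπ)⟩
  simp only [w, positionColor_of_lt π (show (j : ℕ) < m + m by omega),
    positionColor_of_lt π (show m + j < m + m by omega)]

theorem exists_extension_of_not_blocksPair {V : Type*} {G : SimpleGraph V} {P : Set V}
    {d : V → ℕ} {m r : ℕ} (hmr : m ≤ r) {c : V → Fin r}
    (hc : ∀ u v, G.Adj u v → c u ≠ c v) (hd : ∀ x ∈ P, ∀ y ∈ P, G.Adj x y → d x ≠ d y)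
    (hdn : ∀ x ∈ P, d x ≤ m + m) (π : Equiv.Perm (Fin (m + m)))
    (hπ : ∀ j : Fin m,
      ¬ BlocksPair G P d c (Fin.castLE hmr j) (positionColor π j) (positionColor π (m + j))) :
    ∃ f : V → ℕ, (∀ u v, G.Adj u v → f u ≠ f v) ∧ (∀ v ∉ P, 1 ≤ f v ∧ f v ≤ m + r) ∧
      ∀ v ∈ P, f v = d v := by
  -- Class `p` may use the colours at positions `p` (when `p < m`) and `m + p`: for `p < m` these
  -- are two precolours, otherwise a single fresh colour.
  set cls : ℕ → ℕ := fun q => if q < m then q else q - m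
  have hcls (p : ℕ) : cls (m + p) = p := by simp [cls]
  have hL : Pairwise (Disjoint on fun p : Fin r => positionColor π '' {q | cls q = p}) := by
    refine fun p p' hpp' => (Set.disjoint_image_iff (positionColor_injective π)).2 ?_
    exact Set.disjoint_left.2 fun q hq hq' => hpp' (Fin.ext (hq.symm.trans hq'))
  have hfree (u : V) (hu : u ∉ P) :
      ∃ x ∈ positionColor π '' {q | cls q = c u}, ¬ SeesColor G P d u x := by
    by_cases hp : (c u : ℕ) < m
    · have hnb := hπ ⟨c u, hp⟩
      by_cases hs : SeesColor G P d u (positionColor π (c u))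
      · exact ⟨_, ⟨m + c u, hcls _, rfl⟩, fun hs' => hnb ⟨u, rfl, hs, hs'⟩⟩
      · exact ⟨_, ⟨c u, by simp [cls, hp], rfl⟩, hs⟩
    · refine ⟨_, ⟨m + c u, hcls _, rfl⟩, ?_⟩
      rintro ⟨a, ha, -, hda⟩
      rw [positionColor_of_le π (by omega)] at hda
      have := hdn a ha
      omega
  obtain ⟨f, hf, hfL, hfP⟩ := exists_extension_of_pairwise_disjoint hc hd _ hL hfree
  refine ⟨f, hf, fun v hv => ?_, hfP⟩
  obtain ⟨q, hq, hfq⟩ := hfL v hv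
  have hqr : q < m + r := by
    have := (c v).isLt
    simp only [cls, Set.mem_ofPred_eq] at hq
    split_ifs at hq <;> omega
  have := positionColor_le π (q := q)
  have := one_le_positionColor π (q := q)
  omega

theorem stmt_16_general {V : Type*} [Fintype V] (k r : ℕ)
    (hkr : k ≤ r) (heven : Even (r + k))
    (G : SimpleGraph V) (hχ : G.chromaticNumber ≤ r) (P : Set V)
    (d : V → ℕ) (hd : ∀ x ∈ P, ∀ y ∈ P, G.Adj x y → d x ≠ d y)
    (hdr : ∀ x ∈ P, d x ∈ Finset.Icc 1 (r + k))
    (hD : (pairsAtMost G P 2).ncard < 2 * (r + k - 1)) :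
    ∃ f : V → ℕ, (∀ u v, G.Adj u v → f u ≠ f v) ∧
      (∀ v, 1 ≤ f v ∧ 2 * f v ≤ 3 * r + k) ∧ ∀ x ∈ P, f x = d x := by
  obtain ⟨m, hm⟩ := heven
  have hmr : m ≤ r := by omega
  obtain ⟨c⟩ := SimpleGraph.chromaticNumber_le_iff_colorable.1 hχ
  obtain ⟨π, hπ⟩ := exists_perm_sum_blockCost_le_one d (fun _ _ => c.valid) (hm ▸ hD)
  obtain ⟨g, hg⟩ := exists_perm_forall_not_of_sum_blockCost_le_one _ (Fin.castLE hmr) hπ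
  obtain ⟨f, hf, hfnP, hfP⟩ := exists_extension_of_not_blocksPair hmr
    (fun u v huv => g.symm.injective.ne (c.valid huv)) hd
    (fun x hx => hm ▸ (mem_Icc.1 (hdr x hx)).2) π
    (fun j => by simpa [BlocksPair, Equiv.symm_apply_eq] using hg j)
  refine ⟨f, hf, fun v => ?_, hfP⟩
  by_cases hv : v ∈ P
  · have := mem_Icc.1 (hdr v hv)
    rw [hfP v hv]
    omega
  · have := hfnP v hv
    omega

/-- r+k even, k ≤ r, |D_G(P,2)| < 2(r+k-1): any (r+k)-precoloring of P
extends to a coloring of G with at most (3r+k)/2 colors (colors c with 2c ≤ 3r+k). -/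
theorem stmt_16 {V : Type*} [Fintype V] (k r : ℕ) (hk : 1 ≤ k) (hr : 2 ≤ r)
    (hkr : k ≤ r) (heven : Even (r + k))
    (G : SimpleGraph V) (hχ : G.chromaticNumber ≤ r) (P : Set V)
    (d : V → ℕ) (hd : ∀ x ∈ P, ∀ y ∈ P, G.Adj x y → d x ≠ d y)
    (hdr : ∀ x ∈ P, d x ∈ Finset.Icc 1 (r + k))
    (hD : (pairsAtMost G P 2).ncard < 2 * (r + k - 1)) :
    ∃ f : V → ℕ, (∀ u v, G.Adj u v → f u ≠ f v) ∧
      (∀ v, 1 ≤ f v ∧ 2 * f v ≤ 3 * r + k) ∧ ∀ x ∈ P, f x = d x :=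
  stmt_16_general k r hkr heven G hχ P d hd hdr hD
end

section
/- For every pair of integers r and k with r ≥ 2, k ≤ r and r+k even, there exist infinitely many triples (G, P, d) such that G is a graph with chromatic number at most r, P ⊆ V(G) with |D_G(P,2)| = 2(r+k−1), d : P → {1,...,r+k} is a proper coloring of G[P], and d cannot be extended to a proper coloring of G using at most (3r+k)/2 colors. -/
/-!
The graph is a complete `r`-partite graph whose vertices carry a type `t < M = r + k - 1`
(and a copy index, only to make the graph large), together with precoloured vertices
`a_ε` (colour `1`) and `b_{ε,t}` (colour `t + 2`) for each side `ε : Bool`; a vertex of part `j`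
and type `t` is adjacent to `a_ε` and `b_{ε,t}`, where `ε` is the side of `j`. Splitting the
parts into two sides keeps the graph `r`-colourable, and the only precoloured pairs at distance
two are the `2M` pairs `{a_ε, b_{ε,t}}`.

In an extension no part uses colour `1`, and a part all of whose colours lie in `2, …, r + k`
uses at least two of them: if its type-`0` vertex gets colour `c`, its type-`(c - 2)` vertex
cannot. The parts use disjoint sets of colours, so giving the colours `≤ r + k` weight `1` and
the larger ones weight `2`, the `r` parts need total weight `2r`, whereas the colours
`2, …, ⌊(3r + k)/2⌋` only provide `2⌊(3r + k)/2⌋ - (r + k) - 1 < 2r`.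
-/

namespace SimpleGraph.Walk

theorem exists_adj_adj_of_length_le_two {V : Type*} {G : SimpleGraph V} {u v : V}
    (p : G.Walk u v) (hp : p.length ≤ 2) (huv : u ≠ v) (hnadj : ¬ G.Adj u v) :
    ∃ w, G.Adj u w ∧ G.Adj w v := by
  match p with
  | nil => exact absurd rfl huv
  | cons h nil => exact absurd h hnadj
  | cons h (cons h' nil) => exact ⟨_, h, h'⟩
  | cons _ (cons _ (cons _ _)) => simp at hp

end SimpleGraph.Walk

def colorWeight (L c : ℕ) : ℕ := if c ≤ L then 1 else 2

theorem two_le_sum_colorWeight {L : ℕ} {S : Finset ℕ} (h : (∃ c ∈ S, L < c) ∨ 1 < S.card) :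
    2 ≤ ∑ c ∈ S, colorWeight L c := by
  rcases h with ⟨c, hc, hLc⟩ | hS
  · calc 2 = colorWeight L c := by simp [colorWeight, hLc.not_ge]
      _ ≤ _ := Finset.single_le_sum (fun _ _ => Nat.zero_le _) hc
  · calc 2 ≤ ∑ _c ∈ S, 1 := by simp only [Finset.sum_const, smul_eq_mul, mul_one]; omega
      _ ≤ _ := Finset.sum_le_sum fun c _ => by unfold colorWeight; split_ifs <;> omega

theorem sum_colorWeight_Icc {L B : ℕ} (hL : 1 ≤ L) (hLB : L ≤ B) :
    ∑ c ∈ Finset.Icc 2 B, colorWeight L c = L - 1 + 2 * (B - L) := by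
  induction B, hLB using Nat.le_induction with
  | base =>
    rw [Finset.sum_congr rfl fun c hc =>
      show colorWeight L c = 1 from if_pos (Finset.mem_Icc.mp hc).2]
    simp
  | succ B hLB ih =>
    rw [Finset.sum_Icc_succ_top (by omega), ih, colorWeight, if_neg (by omega)]
    omega

namespace PrecoloringSharpness

abbrev Vertex (r M s : ℕ) : Type := (Fin r × Fin M × Fin s) ⊕ (Bool × Option (Fin M))

def side {r : ℕ} (j : Fin r) : Bool := j.val = 0

def adj (r M s : ℕ) : Vertex r M s → Vertex r M s → Prop
  | .inl u, .inl v => u.1 ≠ v.1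
  | .inl u, .inr p => p.1 = side u.1 ∧ (p.2 = none ∨ p.2 = some u.2.1)
  | .inr p, .inl u => p.1 = side u.1 ∧ (p.2 = none ∨ p.2 = some u.2.1)
  | .inr _, .inr _ => False

def graph (r M s : ℕ) : SimpleGraph (Vertex r M s) where
  Adj := adj r M s
  symm := ⟨by rintro (u | p) (v | q) h <;> first | exact Ne.symm h | exact h⟩
  loopless := ⟨by rintro (u | p) h <;> first | exact h rfl | exact h⟩

def precolored (r M s : ℕ) : Set (Vertex r M s) := Set.range Sum.inr

def precoloring (r M s : ℕ) : Vertex r M s → ℕ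
  | .inr (_, some t) => t + 2
  | _ => 1

variable {r M s : ℕ}

theorem le_card_vertex (hr : 1 ≤ r) (hM : 1 ≤ M) : s ≤ Fintype.card (Vertex r M s) := by
  calc s = 1 * (1 * s) := by ring
    _ ≤ r * (M * s) := by gcongr
    _ ≤ Fintype.card (Vertex r M s) := by simp

def partColoring (hr : 2 ≤ r) : (graph r M s).Coloring (Fin r) :=
  SimpleGraph.Coloring.mk
    (Sum.elim Prod.fst fun p => if p.1 then ⟨1, hr⟩ else ⟨0, by omega⟩)
    (by
      have hside : ∀ j : Fin r, j ≠ if side j then ⟨1, hr⟩ else ⟨0, by omega⟩ := by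
        intro j
        by_cases h0 : j.val = 0 <;> simp [side, h0, Fin.ext_iff]
      rintro (⟨j, t, i⟩ | ⟨ε, o⟩) (⟨j', t', i'⟩ | ⟨ε', o'⟩) h
      · exact h
      · obtain ⟨rfl, -⟩ := h
        exact hside j
      · obtain ⟨rfl, -⟩ := h
        exact (hside j').symm
      · exact h.elim)

theorem colorable (hr : 2 ≤ r) : (graph r M s).Colorable r := ⟨partColoring hr⟩

theorem exists_side_eq (hr : 2 ≤ r) (ε : Bool) : ∃ j : Fin r, side j = ε := by
  cases ε
  · exact ⟨⟨1, hr⟩, by simp [side]⟩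
  · exact ⟨⟨0, by omega⟩, by simp [side]⟩

theorem pairsAtMost_precolored (hr : 2 ≤ r) (i : Fin s) :
    pairsAtMost (graph r M s) (precolored r M s) 2 =
      Set.range fun q : Bool × Fin M => s(.inr (q.1, none), .inr (q.1, some q.2)) := by
  ext e
  constructor
  · rintro ⟨_, _, rfl, ⟨⟨ε, o⟩, rfl⟩, ⟨⟨ε', o'⟩, rfl⟩, hne, p, hp⟩
    obtain ⟨⟨j, t, _⟩ | _, ⟨rfl, ho⟩, ⟨rfl, ho'⟩⟩ :=
      p.exists_adj_adj_of_length_le_two hp hne id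
    · rcases ho with rfl | rfl <;> rcases ho' with rfl | rfl
      · exact absurd rfl hne
      · exact ⟨(side j, t), rfl⟩
      · exact ⟨(side j, t), Sym2.eq_swap⟩
      · exact absurd rfl hne
  · rintro ⟨⟨ε, t⟩, rfl⟩
    obtain ⟨j, rfl⟩ := exists_side_eq hr ε
    have h₁ : (graph r M s).Adj (.inr (side j, none)) (.inl (j, t, i)) := ⟨rfl, .inl rfl⟩
    have h₂ : (graph r M s).Adj (.inl (j, t, i)) (.inr (side j, some t)) := ⟨rfl, .inr rfl⟩
    exact ⟨_, _, rfl, ⟨_, rfl⟩, ⟨_, rfl⟩, by simp, h₁.toWalk.append h₂.toWalk, by simp⟩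

theorem ncard_pairsAtMost_precolored (hr : 2 ≤ r) (i : Fin s) :
    (pairsAtMost (graph r M s) (precolored r M s) 2).ncard = 2 * M := by
  rw [pairsAtMost_precolored hr i, Set.ncard_range_of_injective]
  · simp
  · rintro ⟨ε, t⟩ ⟨ε', t'⟩ h
    simpa [Sym2.eq_iff] using h

theorem precoloring_mem_Icc {x : Vertex r M s} (hx : x ∈ precolored r M s) :
    precoloring r M s x ∈ Finset.Icc 1 (M + 1) := by
  obtain ⟨⟨ε, _ | t⟩, rfl⟩ := hx
  · simp [precoloring]
  · simp only [precoloring, Finset.mem_Icc]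
    omega

def IsExtension (f : Vertex r M s → ℕ) : Prop :=
  (∀ u v, (graph r M s).Adj u v → f u ≠ f v) ∧ ∀ x ∈ precolored r M s, f x = precoloring r M s x

def partColors (f : Vertex r M s → ℕ) (i : Fin s) (j : Fin r) : Finset ℕ :=
  Finset.univ.image fun t => f (.inl (j, t, i))

variable {f : Vertex r M s → ℕ}

theorem partColors_disjoint (hf : ∀ u v, (graph r M s).Adj u v → f u ≠ f v) (i : Fin s)
    {j j' : Fin r} (h : j ≠ j') :
    Disjoint (partColors f i j) (partColors f i j') := by
  simp only [partColors, Finset.disjoint_left, Finset.mem_image, Finset.mem_univ, true_and]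
  rintro _ ⟨t, rfl⟩ ⟨t', h'⟩
  exact hf (.inl (j, t, i)) (.inl (j', t', i)) h h'.symm

theorem IsExtension.apply_inl_ne_one (hf : IsExtension f) (j : Fin r) (t : Fin M) (i : Fin s) :
    f (.inl (j, t, i)) ≠ 1 := by
  have := hf.1 (.inl (j, t, i)) (.inr (side j, none)) ⟨rfl, .inl rfl⟩
  rwa [hf.2 _ ⟨_, rfl⟩] at this

theorem IsExtension.apply_inl_ne_add_two (hf : IsExtension f) (j : Fin r) (t : Fin M)
    (i : Fin s) : f (.inl (j, t, i)) ≠ t + 2 := by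
  have := hf.1 (.inl (j, t, i)) (.inr (side j, some t)) ⟨rfl, .inr rfl⟩
  rwa [hf.2 _ ⟨_, rfl⟩] at this

theorem IsExtension.partColors_subset {B : ℕ} (hf : IsExtension f) (hB : ∀ v, 1 ≤ f v ∧ f v ≤ B)
    (i : Fin s) (j : Fin r) : partColors f i j ⊆ Finset.Icc 2 B := by
  simp only [partColors, Finset.subset_iff, Finset.mem_image, Finset.mem_univ, true_and,
    Finset.mem_Icc]
  rintro _ ⟨t, rfl⟩
  have := hf.apply_inl_ne_one j t i
  have := hB (.inl (j, t, i))
  omega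

theorem IsExtension.exists_lt_or_one_lt_card_partColors (hM : 1 ≤ M) (hf : IsExtension f)
    (hpos : ∀ v, 1 ≤ f v) (i : Fin s) (j : Fin r) :
    (∃ c ∈ partColors f i j, M + 1 < c) ∨ 1 < (partColors f i j).card := by
  by_contra! h
  have mem : ∀ t, f (.inl (j, t, i)) ∈ partColors f i j := fun t =>
    Finset.mem_image_of_mem _ (Finset.mem_univ t)
  set c := f (.inl (j, ⟨0, hM⟩, i))
  have hc : 2 ≤ c ∧ c ≤ M + 1 :=
    ⟨by have := hpos (.inl (j, ⟨0, hM⟩, i)); have := hf.apply_inl_ne_one j ⟨0, hM⟩ i; omega,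
      h.1 c (mem _)⟩
  have hne : f (.inl (j, ⟨c - 2, by omega⟩, i)) ≠ c := by
    have := hf.apply_inl_ne_add_two j ⟨c - 2, by omega⟩ i
    rwa [show c - 2 + 2 = c by omega] at this
  exact hne (Finset.card_le_one.mp h.2 _ (mem _) _ (mem _))

theorem IsExtension.two_mul_le {B : ℕ} (hM : 1 ≤ M) (hMB : M + 1 ≤ B) (hf : IsExtension f)
    (hB : ∀ v, 1 ≤ f v ∧ f v ≤ B) (i : Fin s) : 2 * r ≤ M + 2 * (B - (M + 1)) :=
  calc 2 * r = ∑ _j : Fin r, 2 := by simp [mul_comm]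
    _ ≤ ∑ j, ∑ c ∈ partColors f i j, colorWeight (M + 1) c := Finset.sum_le_sum fun j _ =>
      two_le_sum_colorWeight (hf.exists_lt_or_one_lt_card_partColors hM (fun v => (hB v).1) i j)
    _ = ∑ c ∈ Finset.univ.biUnion (partColors f i), colorWeight (M + 1) c :=
      (Finset.sum_biUnion fun _ _ _ _ h => partColors_disjoint hf.1 i h).symm
    _ ≤ ∑ c ∈ Finset.Icc 2 B, colorWeight (M + 1) c :=
      Finset.sum_le_sum_of_subset (Finset.biUnion_subset.mpr fun j _ =>
        hf.partColors_subset hB i j)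
    _ = M + 2 * (B - (M + 1)) := by rw [sum_colorWeight_Icc (by omega) hMB, Nat.add_sub_cancel]

end PrecoloringSharpness

theorem stmt_18_general (r k : ℕ) (hr : 2 ≤ r) (hkr : k ≤ r) :
    ∀ n : ℕ, ∃ (V : Type) (_ : Fintype V) (G : SimpleGraph V) (P : Set V) (d : V → ℕ),
      n ≤ Fintype.card V ∧
      G.chromaticNumber ≤ r ∧
      (pairsAtMost G P 2).ncard = 2 * (r + k - 1) ∧
      (∀ x ∈ P, ∀ y ∈ P, G.Adj x y → d x ≠ d y) ∧
      (∀ x ∈ P, d x ∈ Finset.Icc 1 (r + k)) ∧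
      ¬ ∃ f : V → ℕ, (∀ u v, G.Adj u v → f u ≠ f v) ∧
          (∀ v, 1 ≤ f v ∧ 2 * f v ≤ 3 * r + k) ∧ ∀ x ∈ P, f x = d x := by
  open PrecoloringSharpness in
  intro n
  have hM : r + k - 1 + 1 = r + k := by omega
  refine ⟨Vertex r (r + k - 1) (n + 1), inferInstance, graph r (r + k - 1) (n + 1),
    precolored r (r + k - 1) (n + 1), precoloring r (r + k - 1) (n + 1),
    (Nat.le_succ n).trans (le_card_vertex (by omega) (by omega)),
    (colorable hr).chromaticNumber_le, ncard_pairsAtMost_precolored hr 0,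
    fun x ⟨_, hx⟩ y ⟨_, hy⟩ h => by subst hx hy; exact h.elim,
    fun x hx => by simpa only [hM] using precoloring_mem_Icc hx, ?_⟩
  rintro ⟨f, hf, hB, hd⟩
  have := IsExtension.two_mul_le (B := (3 * r + k) / 2) (by omega) (by omega) ⟨hf, hd⟩
    (fun v => ⟨(hB v).1, by have := (hB v).2; omega⟩) 0
  omega

/-- sharpness for r+k even: there are triples (G,P,d) of unboundedly
large order with |D_G(P,2)| = 2(r+k-1) whose precoloring does not extend to a coloring
with at most (3r+k)/2 colors (colors c with 2c ≤ 3r+k). -/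
theorem stmt_18 (r k : ℕ) (hr : 2 ≤ r) (hk : 1 ≤ k) (hkr : k ≤ r)
    (heven : Even (r + k)) :
    ∀ n : ℕ, ∃ (V : Type) (_ : Fintype V) (G : SimpleGraph V) (P : Set V) (d : V → ℕ),
      n ≤ Fintype.card V ∧
      G.chromaticNumber ≤ r ∧
      (pairsAtMost G P 2).ncard = 2 * (r + k - 1) ∧
      (∀ x ∈ P, ∀ y ∈ P, G.Adj x y → d x ≠ d y) ∧
      (∀ x ∈ P, d x ∈ Finset.Icc 1 (r + k)) ∧
      ¬ ∃ f : V → ℕ, (∀ u v, G.Adj u v → f u ≠ f v) ∧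
          (∀ v, 1 ≤ f v ∧ 2 * f v ≤ 3 * r + k) ∧ ∀ x ∈ P, f x = d x :=
  stmt_18_general r k hr hkr
end
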